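/- Let a < b be reals, let ψ : [a,b] → ℝ be a concave function, and let ν be a finite measure on ℝ² that is absolutely continuous with respect to Lebesgue measure and has almost everywhere strictly positive density. For a function φ on [a,b] write C_φ = {(x,y) : a ≤ x ≤ b, y ≤ φ(x)}. Then there exist m, h ∈ ℝ such that the linear function ψ₀(x) = mx + h satisfies: (i) ν(C_ψ) = ν(C_{ψ₀}); (ii) ∫_{C_ψ} x dν(x,y) = ∫_{C_{ψ₀}} x dν(x,y); (iii) ψ(a) ≤ ψ₀(a) and ψ(b) ≤ ψ₀(b); (iv) m is at most the right-hand derivative of ψ at a and m is at least the left-hand derivative of ψ at b (these one-sided derivatives, i.e. the limits of the difference quotients (ψ(x) − ψ(a))/(x − a) as x ↓ a and (ψ(b) − ψ(x))/(b − x) as x ↑ b, exist in the extended reals by concavity). -/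

import Mathlib

open MeasureTheory Filter Set Topology

namespace Lemma7

noncomputable section

variable {ν : Measure (ℝ × ℝ)} {ρ : ℝ × ℝ → ENNReal}


/-- Region below the graph of `f` over `[a,b]`. -/
def C (a b : ℝ) (f : ℝ → ℝ) : Set (ℝ × ℝ) := {p | a ≤ p.1 ∧ p.1 ≤ b ∧ p.2 ≤ f p.1}

/-- Region between the graphs of `f` (strictly above) and `g` (weakly below). -/
def R (a b : ℝ) (f g : ℝ → ℝ) : Set (ℝ × ℝ) :=
  {p | a ≤ p.1 ∧ p.1 ≤ b ∧ f p.1 < p.2 ∧ p.2 ≤ g p.1}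

lemma measurableSet_C {a b : ℝ} {f : ℝ → ℝ} (hf : Measurable f) :
    MeasurableSet (C a b f) := by
  have : C a b f = {p : ℝ × ℝ | a ≤ p.1} ∩ ({p | p.1 ≤ b} ∩ {p | p.2 ≤ f p.1}) := by
    ext p; simp [C, and_assoc]
  rw [this]
  exact (measurableSet_le measurable_const measurable_fst).inter
    ((measurableSet_le measurable_fst measurable_const).inter
      (measurableSet_le measurable_snd (hf.comp measurable_fst)))

lemma measurableSet_R {a b : ℝ} {f g : ℝ → ℝ} (hf : Measurable f) (hg : Measurable g) :
    MeasurableSet (R a b f g) := by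
  have : R a b f g = {p : ℝ × ℝ | a ≤ p.1} ∩ ({p | p.1 ≤ b} ∩
      ({p | f p.1 < p.2} ∩ {p | p.2 ≤ g p.1})) := by
    ext p; simp [R, and_assoc]
  rw [this]
  exact (measurableSet_le measurable_const measurable_fst).inter
    ((measurableSet_le measurable_fst measurable_const).inter
      ((measurableSet_lt (hf.comp measurable_fst) measurable_snd).inter
        (measurableSet_le measurable_snd (hg.comp measurable_fst))))

lemma C_diff_C (a b : ℝ) (f g : ℝ → ℝ) : C a b f \ C a b g = R a b g f := by
  ext p
  simp only [C, R, mem_diff, mem_setOf_eq]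
  constructor
  · rintro ⟨⟨h1, h2, h3⟩, h4⟩
    push_neg at h4
    exact ⟨h1, h2, h4 h1 h2, h3⟩
  · rintro ⟨h1, h2, h3, h4⟩
    exact ⟨⟨h1, h2, h4⟩, fun h => absurd h.2.2 (not_le.2 h3)⟩

lemma vol_R {a b : ℝ} {f g : ℝ → ℝ} (hf : Measurable f) (hg : Measurable g) :
    volume (R a b f g) = ∫⁻ x in Icc a b, ENNReal.ofReal (g x - f x) := by
  rw [Measure.volume_eq_prod, Measure.prod_apply (measurableSet_R hf hg)]
  rw [← lintegral_indicator measurableSet_Icc]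
  apply lintegral_congr
  intro x
  by_cases hx : x ∈ Icc a b
  · have : Prod.mk x ⁻¹' R a b f g = Ioc (f x) (g x) := by
      ext y; simp [R, hx.1, hx.2, mem_Ioc]
    rw [this, indicator_of_mem hx, Real.volume_Ioc]
  · have : Prod.mk x ⁻¹' R a b f g = ∅ := by
      ext y
      simp only [R, mem_preimage, mem_setOf_eq, mem_empty_iff_false, iff_false]
      rintro ⟨h1, h2, -⟩
      exact hx ⟨h1, h2⟩
    rw [this, indicator_of_notMem hx]
    simp

lemma vol_vline (c : ℝ) : volume {p : ℝ × ℝ | p.1 = c} = 0 := by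
  have : {p : ℝ × ℝ | p.1 = c} = ({c} : Set ℝ) ×ˢ (univ : Set ℝ) := by
    ext p; constructor
    · intro hp; exact ⟨hp, trivial⟩
    · intro hp; exact hp.1
  rw [this, Measure.volume_eq_prod, Measure.prod_prod]
  simp

lemma vol_graph (m h : ℝ) : volume {p : ℝ × ℝ | p.2 = m * p.1 + h} = 0 := by
  have hm : MeasurableSet {p : ℝ × ℝ | p.2 = m * p.1 + h} :=
    measurableSet_eq_fun measurable_snd
      (((measurable_const.mul measurable_fst)).add measurable_const)
  rw [Measure.volume_eq_prod, Measure.prod_apply hm]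
  have : ∀ x : ℝ, Prod.mk x ⁻¹' {p : ℝ × ℝ | p.2 = m * p.1 + h} = {m * x + h} := by
    intro x; ext y; simp [eq_comm]
  simp only [this]
  simp



lemma nu_null (hν : ν = (volume : Measure (ℝ × ℝ)).withDensity ρ)
    {E : Set (ℝ × ℝ)} (hE : volume E = 0) : ν E = 0 := by
  rw [hν]; exact (withDensity_absolutelyContinuous _ _) hE

lemma vol_null_of_nu_null (hν : ν = (volume : Measure (ℝ × ℝ)).withDensity ρ)
    (hρmeas : Measurable ρ) (hρpos : ∀ᵐ p ∂(volume : Measure (ℝ × ℝ)), 0 < ρ p)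
    {E : Set (ℝ × ℝ)} (hE : MeasurableSet E) (h : ν E = 0) : volume E = 0 := by
  rw [hν, withDensity_apply _ hE] at h
  have h' : ρ =ᵐ[(volume : Measure (ℝ × ℝ)).restrict E] 0 :=
    (lintegral_eq_zero_iff hρmeas).1 h
  have hpos' : ∀ᵐ p ∂((volume : Measure (ℝ × ℝ)).restrict E), 0 < ρ p :=
    ae_restrict_of_ae hρpos
  have hfalse : ∀ᵐ p ∂((volume : Measure (ℝ × ℝ)).restrict E), False := by
    filter_upwards [h', hpos'] with p h1 h2
    rw [Pi.zero_apply] at h1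
    rw [h1] at h2
    exact lt_irrefl 0 h2
  have := ae_iff.1 hfalse
  simpa [Measure.restrict_apply_univ] using this

lemma nu_pos_of_vol_pos (hν : ν = (volume : Measure (ℝ × ℝ)).withDensity ρ)
    (hρmeas : Measurable ρ) (hρpos : ∀ᵐ p ∂(volume : Measure (ℝ × ℝ)), 0 < ρ p)
    {E : Set (ℝ × ℝ)} (hE : MeasurableSet E) (h : 0 < volume E) : 0 < ν E := by
  rcases eq_or_lt_of_le ((zero_le : 0 ≤ ν E)) with h' | h'
  · exact absurd (vol_null_of_nu_null hν hρmeas hρpos hE h'.symm) (ne_of_gt h)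
  · exact h'

/-- integrability of the first coordinate on a set of finite measure contained in a strip -/
lemma integrableOn_fst {K : ℝ} {s : Set (ℝ × ℝ)} [IsFiniteMeasure ν]
    (hs : MeasurableSet s) (hK : ∀ p ∈ s, |p.1| ≤ K) :
    IntegrableOn (fun p : ℝ × ℝ => p.1) s ν := by
  refine Integrable.mono' (integrable_const K) ?_ ?_
  · exact (measurable_fst).aestronglyMeasurable
  · rw [ae_restrict_iff' hs]
    exact ae_of_all _ fun p hp => by simpa [Real.norm_eq_abs] using hK p hp

/-- Splitting of a set integral over `A` as the part over `A \ B` plus the part over `A ∩ B`. -/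
lemma integral_split {A B : Set (ℝ × ℝ)} (hA : MeasurableSet A) (hB : MeasurableSet B)
    {f : ℝ × ℝ → ℝ} (hfA : IntegrableOn f A ν) :
    ∫ p in A, f p ∂ν = (∫ p in A \ B, f p ∂ν) + ∫ p in A ∩ B, f p ∂ν := by
  have hdisj : Disjoint (A \ B) (A ∩ B) := Set.disjoint_left.2 fun p hp hp2 => hp.2 hp2.2
  rw [← setIntegral_union hdisj (hA.inter hB)
    (hfA.mono_set diff_subset) (hfA.mono_set inter_subset_left), diff_union_inter]

lemma nu_diff_eq {A B : Set (ℝ × ℝ)} [IsFiniteMeasure ν] (hA : MeasurableSet A)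
    (hB : MeasurableSet B) (hmass : ν A = ν B) : ν (A \ B) = ν (B \ A) := by
  have h1 : ν (A \ B) + ν (A ∩ B) = ν A := measure_diff_add_inter A hB
  have h2 : ν (B \ A) + ν (B ∩ A) = ν B := measure_diff_add_inter B hA
  rw [inter_comm] at h2
  have hfin : ν (A ∩ B) ≠ ⊤ := (measure_lt_top ν _).ne
  rw [hmass, ← h2] at h1
  exact (ENNReal.add_left_inj hfin).1 h1

/-- Moment comparison: if `A`, `B` have the same finite `ν`-measure, `A \ B` lies (weakly) to
the left of the vertical line `x = c` and `B \ A` to the right, then the `x`-moment of `A` is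
at most that of `B`. -/
lemma moment_le {A B : Set (ℝ × ℝ)} [IsFiniteMeasure ν] (hA : MeasurableSet A)
    (hB : MeasurableSet B) {K : ℝ} (hKA : ∀ p ∈ A, |p.1| ≤ K) (hKB : ∀ p ∈ B, |p.1| ≤ K)
    (hmass : ν A = ν B) {c : ℝ} (hP : ∀ p ∈ A \ B, p.1 ≤ c) (hN : ∀ p ∈ B \ A, c ≤ p.1) :
    ∫ p in A, p.1 ∂ν ≤ ∫ p in B, p.1 ∂ν := by
  have hiA : IntegrableOn (fun p : ℝ × ℝ => p.1) A ν := integrableOn_fst hA hKA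
  have hiB : IntegrableOn (fun p : ℝ × ℝ => p.1) B ν := integrableOn_fst hB hKB
  have hsplitA := integral_split (ν := ν) hA hB (f := fun p : ℝ × ℝ => p.1) hiA
  have hsplitB := integral_split (ν := ν) hB hA (f := fun p : ℝ × ℝ => p.1) hiB
  rw [inter_comm] at hsplitB
  have hd := nu_diff_eq (ν := ν) hA hB hmass
  have hconstP : IntegrableOn (fun _ : ℝ × ℝ => c) (A \ B) ν :=
    integrableOn_const (measure_lt_top ν _).ne
  have hconstN : IntegrableOn (fun _ : ℝ × ℝ => c) (B \ A) ν :=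
    integrableOn_const (measure_lt_top ν _).ne
  have h1 : ∫ p in A \ B, (p.1 : ℝ) ∂ν ≤ c * (ν (A \ B)).toReal := by
    have := setIntegral_mono_on (hiA.mono_set diff_subset) hconstP (hA.diff hB) hP
    rwa [setIntegral_const, smul_eq_mul, mul_comm] at this
  have h2 : c * (ν (B \ A)).toReal ≤ ∫ p in B \ A, (p.1 : ℝ) ∂ν := by
    have := setIntegral_mono_on hconstN (hiB.mono_set diff_subset) (hB.diff hA) hN
    rwa [setIntegral_const, smul_eq_mul, mul_comm] at this
  have h1' : ∫ p in A \ B, (p.1 : ℝ) ∂ν ≤ c * (ν (B \ A)).toReal := by rw [← hd]; exact h1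
  rw [hsplitA, hsplitB]
  linarith [h1', h2]


/-- Equality case: if masses and moments agree and the sets are separated by `x = c`,
then the symmetric difference is `ν`-null. -/
lemma diff_null_of_moment_eq [IsFiniteMeasure ν]
    (hν : ν = (volume : Measure (ℝ × ℝ)).withDensity ρ)
    {A B : Set (ℝ × ℝ)} (hA : MeasurableSet A) (hB : MeasurableSet B)
    {K : ℝ} (hKA : ∀ p ∈ A, |p.1| ≤ K) (hKB : ∀ p ∈ B, |p.1| ≤ K)
    (hmass : ν A = ν B) {c : ℝ} (hP : ∀ p ∈ A \ B, p.1 ≤ c) (hN : ∀ p ∈ B \ A, c ≤ p.1)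
    (hmom : ∫ p in A, p.1 ∂ν = ∫ p in B, p.1 ∂ν) :
    ν (A \ B) = 0 ∧ ν (B \ A) = 0 := by
  have hiA : IntegrableOn (fun p : ℝ × ℝ => p.1) A ν := integrableOn_fst hA hKA
  have hiB : IntegrableOn (fun p : ℝ × ℝ => p.1) B ν := integrableOn_fst hB hKB
  have hsplitA := integral_split (ν := ν) hA hB (f := fun p : ℝ × ℝ => p.1) hiA
  have hsplitB := integral_split (ν := ν) hB hA (f := fun p : ℝ × ℝ => p.1) hiB
  rw [inter_comm] at hsplitB
  have hd := nu_diff_eq (ν := ν) hA hB hmass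
  have hmomd : ∫ p in A \ B, (p.1 : ℝ) ∂ν = ∫ p in B \ A, (p.1 : ℝ) ∂ν := by
    rw [hsplitA, hsplitB] at hmom; linarith
  have hconstP : IntegrableOn (fun _ : ℝ × ℝ => c) (A \ B) ν :=
    integrableOn_const (measure_lt_top ν _).ne
  have hconstN : IntegrableOn (fun _ : ℝ × ℝ => c) (B \ A) ν :=
    integrableOn_const (measure_lt_top ν _).ne
  have h1 : ∫ p in A \ B, (p.1 : ℝ) ∂ν ≤ c * (ν (A \ B)).toReal := by
    have := setIntegral_mono_on (hiA.mono_set diff_subset) hconstP (hA.diff hB) hP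
    rwa [setIntegral_const, smul_eq_mul, mul_comm] at this
  have h2 : c * (ν (B \ A)).toReal ≤ ∫ p in B \ A, (p.1 : ℝ) ∂ν := by
    have := setIntegral_mono_on hconstN (hiB.mono_set diff_subset) (hB.diff hA) hN
    rwa [setIntegral_const, smul_eq_mul, mul_comm] at this
  have htR : (ν (A \ B)).toReal = (ν (B \ A)).toReal := by rw [hd]
  -- all inequalities are equalities
  have heqN : ∫ p in B \ A, (p.1 : ℝ) ∂ν = c * (ν (B \ A)).toReal := by
    rw [← hmomd]; rw [htR] at h1; linarith
  have heqP : ∫ p in A \ B, (p.1 : ℝ) ∂ν = c * (ν (A \ B)).toReal := by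
    rw [hmomd, htR]; exact heqN
  -- conclude each difference is concentrated on the line x = c
  have key : ∀ (S : Set (ℝ × ℝ)), MeasurableSet S →
      (∀ p ∈ S, |p.1| ≤ K) → (∀ p ∈ S, c ≤ p.1) →
      (∫ p in S, (p.1 : ℝ) ∂ν = c * (ν S).toReal) → ν S = 0 := by
    intro S hS hKS hcS hint
    have hiS : IntegrableOn (fun p : ℝ × ℝ => p.1) S ν := integrableOn_fst hS hKS
    have hconstS : IntegrableOn (fun _ : ℝ × ℝ => c) S ν :=
      integrableOn_const (measure_lt_top ν _).ne
    have hzero : ∫ p in S, ((p.1 : ℝ) - c) ∂ν = 0 := by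
      rw [integral_sub hiS hconstS, setIntegral_const, smul_eq_mul, mul_comm, hint]
      simp [Measure.real]
    have hnonneg : 0 ≤ᵐ[ν.restrict S] fun p : ℝ × ℝ => p.1 - c := by
      rw [EventuallyLE, ae_restrict_iff' hS]
      exact ae_of_all _ fun p hp => by simpa using hcS p hp
    have hae := (integral_eq_zero_iff_of_nonneg_ae hnonneg (hiS.sub hconstS)).1 hzero
    have h0 : ν.restrict S {p : ℝ × ℝ | ¬ ((fun p : ℝ × ℝ => p.1 - c) p = (0 : ℝ × ℝ → ℝ) p)} = 0 :=
      ae_iff.1 hae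
    have h0' : ν ({p : ℝ × ℝ | p.1 ≠ c} ∩ S) = 0 := by
      rw [Measure.restrict_apply' hS] at h0
      refine le_antisymm (le_trans (measure_mono ?_) h0.le) zero_le
      rintro p ⟨hne, hpS⟩
      exact ⟨sub_ne_zero.2 hne, hpS⟩
    have hline : ν {p : ℝ × ℝ | p.1 = c} = 0 := nu_null hν (vol_vline c)
    have : S ⊆ ({p : ℝ × ℝ | p.1 ≠ c} ∩ S) ∪ {p : ℝ × ℝ | p.1 = c} := by
      intro p hp
      by_cases hc : p.1 = c
      · exact Or.inr hc
      · exact Or.inl ⟨hc, hp⟩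
    have hle : ν S ≤ 0 := by
      calc ν S ≤ ν (({p : ℝ × ℝ | p.1 ≠ c} ∩ S) ∪ {p : ℝ × ℝ | p.1 = c}) := measure_mono this
        _ ≤ ν ({p : ℝ × ℝ | p.1 ≠ c} ∩ S) + ν {p : ℝ × ℝ | p.1 = c} := measure_union_le _ _
        _ = 0 := by rw [h0', hline, add_zero]
    exact le_antisymm hle zero_le
  have hNnull : ν (B \ A) = 0 :=
    key (B \ A) (hB.diff hA) (fun p hp => hKB p hp.1) hN heqN
  exact ⟨hd.trans hNnull, hNnull⟩

section Concave

variable {a b : ℝ} {ψ : ℝ → ℝ}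

/-- chord inequality for concave functions -/
lemma concave_chord (hψ : ConcaveOn ℝ (Icc a b) ψ) {u v x : ℝ} (hu : u ∈ Icc a b)
    (hv : v ∈ Icc a b) (huv : u < v) (hxu : u ≤ x) (hxv : x ≤ v) :
    ((v - x) / (v - u)) * ψ u + ((x - u) / (v - u)) * ψ v ≤ ψ x := by
  have hvu : 0 < v - u := by linarith
  have h1 : (0 : ℝ) ≤ (v - x) / (v - u) := div_nonneg (by linarith) hvu.le
  have h2 : (0 : ℝ) ≤ (x - u) / (v - u) := div_nonneg (by linarith) hvu.le
  have h3 : (v - x) / (v - u) + (x - u) / (v - u) = 1 := by field_simp; ring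
  have h4 : ((v - x) / (v - u)) • u + ((x - u) / (v - u)) • v = x := by
    rw [smul_eq_mul, smul_eq_mul, div_mul_eq_mul_div, div_mul_eq_mul_div, ← add_div,
      div_eq_iff hvu.ne']
    ring
  have := hψ.2 hu hv h1 h2 h3
  rw [h4] at this
  simpa [smul_eq_mul] using this

lemma concave_lb (hab : a < b) (hψ : ConcaveOn ℝ (Icc a b) ψ) {x : ℝ} (hx : x ∈ Icc a b) :
    min (ψ a) (ψ b) ≤ ψ x := by
  have h := concave_chord hψ (left_mem_Icc.2 hab.le) (right_mem_Icc.2 hab.le) hab hx.1 hx.2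
  have hba : (0 : ℝ) < b - a := by linarith
  have h1 : (0 : ℝ) ≤ (b - x) / (b - a) := div_nonneg (by linarith [hx.2]) hba.le
  have h2 : (0 : ℝ) ≤ (x - a) / (b - a) := div_nonneg (by linarith [hx.1]) hba.le
  have h3 : (b - x) / (b - a) + (x - a) / (b - a) = 1 := by field_simp; ring
  have e : (b - x) / (b - a) * min (ψ a) (ψ b) + (x - a) / (b - a) * min (ψ a) (ψ b)
      = min (ψ a) (ψ b) := by rw [← add_mul, h3, one_mul]
  linarith [mul_le_mul_of_nonneg_left (min_le_left (ψ a) (ψ b)) h1,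
    mul_le_mul_of_nonneg_left (min_le_right (ψ a) (ψ b)) h2]

/-- an upper bound for a concave function on `[a,b]` -/
def psiUB (a b : ℝ) (ψ : ℝ → ℝ) : ℝ :=
  max (max (ψ a) (ψ b)) (2 * ψ ((a + b) / 2) - min (ψ a) (ψ b))

lemma concave_ub (hab : a < b) (hψ : ConcaveOn ℝ (Icc a b) ψ) {x : ℝ} (hx : x ∈ Icc a b) :
    ψ x ≤ psiUB a b ψ := by
  rw [mem_Icc] at hx
  have hmidmem : (a + b) / 2 ∈ Icc a b := by rw [mem_Icc]; constructor <;> linarith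
  have hx'mem : a + b - x ∈ Icc a b := by rw [mem_Icc]; constructor <;> linarith
  have hxmem : x ∈ Icc a b := by rw [mem_Icc]; exact hx
  have hlb' := concave_lb hab hψ hx'mem
  have hlb := concave_lb hab hψ hxmem
  have hmax := le_max_right (max (ψ a) (ψ b)) (2 * ψ ((a + b) / 2) - min (ψ a) (ψ b))
  rcases lt_trichotomy x (a + b - x) with h | h | h
  · have hkey := concave_chord (x := (a + b) / 2) hψ hxmem hx'mem h (by linarith) (by linarith)
    have hc1 : (a + b - x - (a + b) / 2) / (a + b - x - x) = 1 / 2 := by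
      rw [div_eq_div_iff (by linarith) (by norm_num)]; ring
    have hc2 : ((a + b) / 2 - x) / (a + b - x - x) = 1 / 2 := by
      rw [div_eq_div_iff (by linarith) (by norm_num)]; ring
    rw [hc1, hc2] at hkey
    have hgoal : ψ x ≤ 2 * ψ ((a + b) / 2) - min (ψ a) (ψ b) := by linarith
    exact le_trans hgoal hmax
  · have hxe : x = (a + b) / 2 := by linarith
    rw [hxe] at hlb ⊢
    have hgoal : ψ ((a + b) / 2) ≤ 2 * ψ ((a + b) / 2) - min (ψ a) (ψ b) := by linarith
    exact le_trans hgoal hmax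
  · have hkey := concave_chord (x := (a + b) / 2) hψ hx'mem hxmem h (by linarith) (by linarith)
    have hc1 : (x - (a + b) / 2) / (x - (a + b - x)) = 1 / 2 := by
      rw [div_eq_div_iff (by linarith) (by norm_num)]; ring
    have hc2 : ((a + b) / 2 - (a + b - x)) / (x - (a + b - x)) = 1 / 2 := by
      rw [div_eq_div_iff (by linarith) (by norm_num)]; ring
    rw [hc1, hc2] at hkey
    have hgoal : ψ x ≤ 2 * ψ ((a + b) / 2) - min (ψ a) (ψ b) := by linarith
    exact le_trans hgoal hmax

/-- slopes from the left endpoint are antitone -/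
lemma slope_left_anti (hab : a < b) (hψ : ConcaveOn ℝ (Icc a b) ψ) {x y : ℝ}
    (hax : a < x) (hxy : x ≤ y) (hyb : y ≤ b) :
    (ψ y - ψ a) / (y - a) ≤ (ψ x - ψ a) / (x - a) := by
  rcases eq_or_lt_of_le hxy with rfl | hxy
  · exact le_refl _
  have hmem : x ∈ Icc a b := ⟨hax.le, by linarith⟩
  have hmem' : y ∈ Icc a b := ⟨by linarith, hyb⟩
  have := hψ.neg.secant_mono (left_mem_Icc.2 hab.le) hmem hmem'
    (ne_of_gt hax) (by intro hy; linarith [hy ▸ hax]) hxy.le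
  simp only [Pi.neg_apply] at this
  have e1 : (-ψ x - -ψ a) / (x - a) = -((ψ x - ψ a) / (x - a)) := by ring
  have e2 : (-ψ y - -ψ a) / (y - a) = -((ψ y - ψ a) / (y - a)) := by ring
  rw [e1, e2] at this
  linarith

/-- slopes into the right endpoint are antitone -/
lemma slope_right_anti (hab : a < b) (hψ : ConcaveOn ℝ (Icc a b) ψ) {x y : ℝ}
    (hax : a ≤ x) (hxy : x ≤ y) (hyb : y < b) :
    (ψ b - ψ y) / (b - y) ≤ (ψ b - ψ x) / (b - x) := by
  rcases eq_or_lt_of_le hxy with rfl | hxy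
  · exact le_refl _
  have hmem : x ∈ Icc a b := ⟨hax, by linarith⟩
  have hmem' : y ∈ Icc a b := ⟨by linarith, hyb.le⟩
  have := hψ.neg.secant_mono (right_mem_Icc.2 hab.le) hmem hmem'
    (by intro hx; linarith [hx ▸ hyb]) (ne_of_lt hyb) hxy.le
  simp only [Pi.neg_apply] at this
  have hxb : x - b ≠ 0 := sub_ne_zero_of_ne (ne_of_lt (by linarith))
  have hbx : b - x ≠ 0 := sub_ne_zero_of_ne (ne_of_gt (by linarith))
  have hyb2 : y - b ≠ 0 := sub_ne_zero_of_ne (ne_of_lt hyb)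
  have hby : b - y ≠ 0 := sub_ne_zero_of_ne (ne_of_gt hyb)
  have e1 : (-ψ x - -ψ b) / (x - b) = (ψ x - ψ b) / (b - x) := by
    rw [div_eq_div_iff hxb hbx]; ring
  have e2 : (-ψ y - -ψ b) / (y - b) = (ψ y - ψ b) / (b - y) := by
    rw [div_eq_div_iff hyb2 hby]; ring
  rw [e1, e2] at this
  have e3 : (ψ b - ψ x) / (b - x) = -((ψ x - ψ b) / (b - x)) := by ring
  have e4 : (ψ b - ψ y) / (b - y) = -((ψ y - ψ b) / (b - y)) := by ring
  rw [e3, e4]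
  linarith

end Concave

section Slopes

variable {a b : ℝ} {ψ : ℝ → ℝ}

/-- the right derivative at `a` (an extended real) -/
def Da (a b : ℝ) (ψ : ℝ → ℝ) : EReal :=
  sSup ((fun x : ℝ => (((ψ x - ψ a) / (x - a) : ℝ) : EReal)) '' Ioo a b)

/-- the left derivative at `b` (an extended real) -/
def Db (a b : ℝ) (ψ : ℝ → ℝ) : EReal :=
  sInf ((fun x : ℝ => (((ψ b - ψ x) / (b - x) : ℝ) : EReal)) '' Ioo a b)

lemma tendsto_Da (hab : a < b) (hψ : ConcaveOn ℝ (Icc a b) ψ) :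
    Tendsto (fun x : ℝ => (((ψ x - ψ a) / (x - a) : ℝ) : EReal)) (nhdsWithin a (Ioc a b))
      (nhds (Da a b ψ)) := by
  rw [nhdsWithin_Ioc_eq_nhdsGT hab]
  refine AntitoneOn.tendsto_nhdsWithin_Ioo_right
    ⟨(a + b) / 2, Set.mem_Ioo.2 ⟨by linarith, by linarith⟩⟩ ?_ (OrderTop.bddAbove _)
  intro x hx y hy hxy
  exact EReal.coe_le_coe_iff.2 (slope_left_anti hab hψ hx.1 hxy hy.2.le)

lemma tendsto_Db (hab : a < b) (hψ : ConcaveOn ℝ (Icc a b) ψ) :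
    Tendsto (fun x : ℝ => (((ψ b - ψ x) / (b - x) : ℝ) : EReal)) (nhdsWithin b (Ico a b))
      (nhds (Db a b ψ)) := by
  rw [nhdsWithin_Ico_eq_nhdsLT hab]
  refine AntitoneOn.tendsto_nhdsWithin_Ioo_left
    ⟨(a + b) / 2, Set.mem_Ioo.2 ⟨by linarith, by linarith⟩⟩ ?_ (OrderBot.bddBelow _)
  intro x hx y hy hxy
  exact EReal.coe_le_coe_iff.2 (slope_right_anti hab hψ hx.1.le hxy hy.2)

lemma le_Da (hab : a < b) (hψ : ConcaveOn ℝ (Icc a b) ψ) {x : ℝ} (hax : a < x) (hxb : x ≤ b) :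
    (((ψ x - ψ a) / (x - a) : ℝ) : EReal) ≤ Da a b ψ := by
  have hz : (a + x) / 2 ∈ Ioo a b := ⟨by linarith, by linarith⟩
  have h1 : (ψ x - ψ a) / (x - a) ≤ (ψ ((a + x) / 2) - ψ a) / ((a + x) / 2 - a) :=
    slope_left_anti hab hψ (by linarith) (by linarith) hxb
  exact le_trans (EReal.coe_le_coe_iff.2 h1) (le_sSup ⟨(a + x) / 2, hz, rfl⟩)

lemma Db_le (hab : a < b) (hψ : ConcaveOn ℝ (Icc a b) ψ) {x : ℝ} (hax : a ≤ x) (hxb : x < b) :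
    Db a b ψ ≤ (((ψ b - ψ x) / (b - x) : ℝ) : EReal) := by
  have hz : (x + b) / 2 ∈ Ioo a b := ⟨by linarith, by linarith⟩
  have h1 : (ψ b - ψ ((x + b) / 2)) / (b - (x + b) / 2) ≤ (ψ b - ψ x) / (b - x) :=
    slope_right_anti hab hψ hax (by linarith) (by linarith)
  exact le_trans (sInf_le ⟨(x + b) / 2, hz, rfl⟩) (EReal.coe_le_coe_iff.2 h1)

/-- If the line lies below `ψ` at `a`, then the set where `ψ` beats the line is an initial
segment: there is `w` separating `{ψ > line}` (left) from `{ψ < line}` (right). -/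
lemma exists_w_left (hab : a < b) (hψ : ConcaveOn ℝ (Icc a b) ψ) {m h : ℝ}
    (hka : m * a + h ≤ ψ a) :
    ∃ w : ℝ, (∀ x, a ≤ x → x ≤ b → m * x + h < ψ x → x ≤ w) ∧
      (∀ x, a ≤ x → x ≤ b → ψ x < m * x + h → w ≤ x) := by
  set S : Set ℝ := {x | (a ≤ x ∧ x ≤ b) ∧ m * x + h ≤ ψ x} with hS
  have hSne : S.Nonempty := ⟨a, ⟨le_refl a, hab.le⟩, hka⟩
  have hSbdd : BddAbove S := ⟨b, fun x hx => hx.1.2⟩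
  refine ⟨sSup S, fun x h1 h2 h3 => le_csSup hSbdd ⟨⟨h1, h2⟩, h3.le⟩, fun x h1 h2 h3 => ?_⟩
  refine csSup_le hSne fun x' hx' => ?_
  by_contra hcon
  push_neg at hcon
  -- x < x', κ a ≥ 0, κ x' ≥ 0 but κ x < 0 : contradiction with concavity
  rcases eq_or_lt_of_le h1 with rfl | hax
  · linarith [hka]
  have hchord := concave_chord (x := x) hψ (left_mem_Icc.2 hab.le)
    (⟨by linarith [hx'.1.1], hx'.1.2⟩ : x' ∈ Icc a b) (by linarith) h1 hcon.le
  have hline : ((x' - x) / (x' - a)) * (m * a + h) + ((x - a) / (x' - a)) * (m * x' + h)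
      = m * x + h := by
    have hne : x' - a ≠ 0 := by intro h0; linarith
    field_simp
    ring
  have ht1 : (0 : ℝ) ≤ (x' - x) / (x' - a) := div_nonneg (by linarith) (by linarith)
  have ht2 : (0 : ℝ) ≤ (x - a) / (x' - a) := div_nonneg (by linarith) (by linarith)
  have hb1 := mul_le_mul_of_nonneg_left hka ht1
  have hb2 := mul_le_mul_of_nonneg_left hx'.2 ht2
  linarith

/-- Mirror image: if the line lies below `ψ` at `b`. -/
lemma exists_w_right (hab : a < b) (hψ : ConcaveOn ℝ (Icc a b) ψ) {m h : ℝ}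
    (hkb : m * b + h ≤ ψ b) :
    ∃ w : ℝ, (∀ x, a ≤ x → x ≤ b → ψ x < m * x + h → x ≤ w) ∧
      (∀ x, a ≤ x → x ≤ b → m * x + h < ψ x → w ≤ x) := by
  set S : Set ℝ := {x | (a ≤ x ∧ x ≤ b) ∧ m * x + h ≤ ψ x} with hS
  have hSne : S.Nonempty := ⟨b, ⟨hab.le, le_refl b⟩, hkb⟩
  have hSbdd : BddBelow S := ⟨a, fun x hx => hx.1.1⟩
  refine ⟨sInf S, fun x h1 h2 h3 => ?_, fun x h1 h2 h3 => csInf_le hSbdd ⟨⟨h1, h2⟩, h3.le⟩⟩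
  refine le_csInf hSne fun x' hx' => ?_
  by_contra hcon
  push_neg at hcon
  -- x' < x ≤ b, κ x' ≥ 0, κ b ≥ 0 but κ x < 0 : contradiction
  rcases eq_or_lt_of_le h2 with rfl | hxb
  · linarith [hkb]
  have hchord := concave_chord (x := x) hψ
    (⟨hx'.1.1, by linarith [hx'.1.2]⟩ : x' ∈ Icc a b) (right_mem_Icc.2 hab.le)
    (by linarith) hcon.le h2
  have hline : ((b - x) / (b - x')) * (m * x' + h) + ((x - x') / (b - x')) * (m * b + h)
      = m * x + h := by
    have hne : b - x' ≠ 0 := by intro h0; linarith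
    field_simp
    ring
  have ht1 : (0 : ℝ) ≤ (b - x) / (b - x') := div_nonneg (by linarith) (by linarith)
  have ht2 : (0 : ℝ) ≤ (x - x') / (b - x') := div_nonneg (by linarith) (by linarith)
  have hb1 := mul_le_mul_of_nonneg_left hx'.2 ht1
  have hb2 := mul_le_mul_of_nonneg_left hkb ht2
  linarith

end Slopes

section Mass

variable {ν : Measure (ℝ × ℝ)} {ρ : ℝ × ℝ → ENNReal}

/-- the line `x ↦ m x + h` -/
def lineF (m h : ℝ) : ℝ → ℝ := fun x => m * x + h

lemma measurable_lineF (m h : ℝ) : Measurable (lineF m h) :=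
  (measurable_const.mul measurable_id).add measurable_const

lemma measurableSet_Cline (a b m h : ℝ) : MeasurableSet (C a b (lineF m h)) :=
  measurableSet_C (measurable_lineF m h)

/-- the strip over `[a,b]` -/
def T (a b : ℝ) : Set (ℝ × ℝ) := Icc a b ×ˢ (univ : Set ℝ)

lemma C_subset_T {a b : ℝ} (f : ℝ → ℝ) : C a b f ⊆ T a b :=
  fun p hp => ⟨⟨hp.1, hp.2.1⟩, trivial⟩

lemma abs_fst_le_of_mem_C {a b : ℝ} {f : ℝ → ℝ} {p : ℝ × ℝ} (hp : p ∈ C a b f) :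
    |p.1| ≤ max |a| |b| := by
  rcases hp with ⟨h1, h2, -⟩
  rcases abs_cases p.1 with ⟨he, -⟩ | ⟨he, -⟩
  · rw [he]
    exact le_trans (le_trans h2 (le_abs_self b)) (le_max_right _ _)
  · rw [he]
    have : -p.1 ≤ -a := by linarith
    exact le_trans (le_trans this (neg_le_abs a)) (le_max_left _ _)

lemma C_mono {a b : ℝ} {f g : ℝ → ℝ} (hfg : ∀ x ∈ Icc a b, f x ≤ g x) :
    C a b f ⊆ C a b g :=
  fun p hp => ⟨hp.1, hp.2.1, le_trans hp.2.2 (hfg p.1 ⟨hp.1, hp.2.1⟩)⟩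

/-- strict monotonicity of mass in the intercept -/
lemma mass_strict_mono (hab : a < b) [IsFiniteMeasure ν]
    (hν : ν = (volume : Measure (ℝ × ℝ)).withDensity ρ) (hρmeas : Measurable ρ)
    (hρpos : ∀ᵐ p ∂(volume : Measure (ℝ × ℝ)), 0 < ρ p) {m h h' : ℝ} (hh : h < h') :
    ν (C a b (lineF m h)) < ν (C a b (lineF m h')) := by
  have hsub : C a b (lineF m h) ⊆ C a b (lineF m h') :=
    C_mono fun x _ => by simp only [lineF]; linarith
  have hdiff : C a b (lineF m h') \ C a b (lineF m h) = R a b (lineF m h) (lineF m h') :=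
    C_diff_C a b _ _
  have hvol : volume (R a b (lineF m h) (lineF m h')) =
      ENNReal.ofReal (h' - h) * volume (Icc a b) := by
    rw [vol_R (measurable_lineF m h) (measurable_lineF m h')]
    have e : (fun x => ENNReal.ofReal (lineF m h' x - lineF m h x))
        = fun _ : ℝ => ENNReal.ofReal (h' - h) := by
      funext x; simp only [lineF]; ring_nf
    rw [e, setLIntegral_const]
  have hvolpos : 0 < volume (R a b (lineF m h) (lineF m h')) := by
    rw [hvol, Real.volume_Icc]
    exact ENNReal.mul_pos (ne_of_gt (ENNReal.ofReal_pos.2 (by linarith)))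
      (ne_of_gt (ENNReal.ofReal_pos.2 (by linarith)))
  have hnupos : 0 < ν (R a b (lineF m h) (lineF m h')) :=
    nu_pos_of_vol_pos hν hρmeas hρpos (measurableSet_R (measurable_lineF m h)
      (measurable_lineF m h')) hvolpos
  have hsplit : ν (C a b (lineF m h') \ C a b (lineF m h)) + ν (C a b (lineF m h') ∩ C a b (lineF m h))
      = ν (C a b (lineF m h')) := measure_diff_add_inter _ (measurableSet_Cline a b m h)
  rw [inter_eq_self_of_subset_right hsub, hdiff] at hsplit
  rw [← hsplit]
  exact lt_of_lt_of_le (ENNReal.lt_add_right (measure_lt_top ν _).ne hnupos.ne')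
    (by rw [add_comm])

/-- symmetric difference control when two lines are uniformly `δ`-close on `[a,b]` -/
lemma C_symmdiff_subset {a b : ℝ} {m h m' h' δ : ℝ}
    (hd : ∀ x ∈ Icc a b, |(m' * x + h') - (m * x + h)| ≤ δ) :
    C a b (lineF m' h') \ C a b (lineF m h) ⊆ R a b (lineF m (h - δ)) (lineF m (h + δ)) ∧
    C a b (lineF m h) \ C a b (lineF m' h') ⊆ R a b (lineF m (h - δ)) (lineF m (h + δ)) := by
  constructor
  · rintro p ⟨⟨h1, h2, h3⟩, h4⟩
    have h4' : lineF m h p.1 < p.2 := by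
      by_contra hcon
      push_neg at hcon
      exact h4 ⟨h1, h2, hcon⟩
    have hb := hd p.1 ⟨h1, h2⟩
    rw [abs_le] at hb
    simp only [lineF] at h3 h4'
    refine ⟨h1, h2, ?_, ?_⟩ <;> simp only [lineF] <;> linarith
  · rintro p ⟨⟨h1, h2, h3⟩, h4⟩
    have h4' : lineF m' h' p.1 < p.2 := by
      by_contra hcon
      push_neg at hcon
      exact h4 ⟨h1, h2, hcon⟩
    have hb := hd p.1 ⟨h1, h2⟩
    rw [abs_le] at hb
    simp only [lineF] at h3 h4'
    refine ⟨h1, h2, ?_, ?_⟩ <;> simp only [lineF] <;> linarith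

lemma abs_toReal_sub_le [IsFiniteMeasure ν] {A B E : Set (ℝ × ℝ)}
    (h1 : A \ B ⊆ E) (h2 : B \ A ⊆ E) :
    |(ν A).toReal - (ν B).toReal| ≤ (ν E).toReal := by
  have hsub1 : A ⊆ B ∪ E := by
    intro p hp
    by_cases hB : p ∈ B
    · exact Or.inl hB
    · exact Or.inr (h1 ⟨hp, hB⟩)
  have hsub2 : B ⊆ A ∪ E := by
    intro p hp
    by_cases hA : p ∈ A
    · exact Or.inl hA
    · exact Or.inr (h2 ⟨hp, hA⟩)
  have k1 : ν A ≤ ν B + ν E := le_trans (measure_mono hsub1) (measure_union_le _ _)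
  have k2 : ν B ≤ ν A + ν E := le_trans (measure_mono hsub2) (measure_union_le _ _)
  have f1 : (ν A).toReal ≤ (ν B).toReal + (ν E).toReal := by
    rw [← ENNReal.toReal_add (measure_lt_top ν _).ne (measure_lt_top ν _).ne]
    exact ENNReal.toReal_mono (by simp [(measure_lt_top ν B).ne, (measure_lt_top ν E).ne]) k1
  have f2 : (ν B).toReal ≤ (ν A).toReal + (ν E).toReal := by
    rw [← ENNReal.toReal_add (measure_lt_top ν _).ne (measure_lt_top ν _).ne]
    exact ENNReal.toReal_mono (by simp [(measure_lt_top ν A).ne, (measure_lt_top ν E).ne]) k2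
  rw [abs_sub_le_iff]
  constructor <;> linarith

/-- the tube around a line shrinks to zero `ν`-measure -/
lemma tube_tendsto_zero (a b : ℝ) [IsFiniteMeasure ν]
    (hν : ν = (volume : Measure (ℝ × ℝ)).withDensity ρ) (m h : ℝ) :
    Tendsto (fun n : ℕ => ν (R a b (lineF m (h - 1 / (n + 1))) (lineF m (h + 1 / (n + 1)))))
      atTop (𝓝 0) := by
  set S : ℕ → Set (ℝ × ℝ) :=
    fun n => R a b (lineF m (h - 1 / (n + 1))) (lineF m (h + 1 / (n + 1))) with hSdef
  have hmeas : ∀ n, NullMeasurableSet (S n) ν :=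
    fun n => (measurableSet_R (measurable_lineF _ _) (measurable_lineF _ _)).nullMeasurableSet
  have hanti : Antitone S := by
    intro n n' hn p hp
    have e1 : (1 : ℝ) / (n' + 1) ≤ 1 / (n + 1) := by
      apply one_div_le_one_div_of_le
      · positivity
      · have := (Nat.cast_le (α := ℝ)).2 hn
        linarith
    rcases hp with ⟨h1, h2, h3, h4⟩
    simp only [lineF] at h3 h4
    refine ⟨h1, h2, ?_, ?_⟩ <;> simp only [lineF] <;> linarith
  have hinter : (⋂ n, S n) ⊆ {p : ℝ × ℝ | p.2 = m * p.1 + h} := by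
    intro p hp
    simp only [mem_iInter] at hp
    have hub : ∀ n : ℕ, |p.2 - (m * p.1 + h)| ≤ 1 / (n + 1) := by
      intro n
      rcases hp n with ⟨-, -, h3, h4⟩
      simp only [lineF] at h3 h4
      rw [abs_le]
      constructor <;> linarith
    have : |p.2 - (m * p.1 + h)| ≤ 0 := by
      by_contra hcon
      push_neg at hcon
      obtain ⟨n, hn⟩ := exists_nat_one_div_lt hcon
      exact absurd (hub n) (not_le.2 hn)
    have := abs_nonneg (p.2 - (m * p.1 + h))
    have : |p.2 - (m * p.1 + h)| = 0 := le_antisymm ‹|p.2 - (m * p.1 + h)| ≤ 0› this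
    rw [abs_eq_zero] at this
    simpa [sub_eq_zero] using this
  have hnull : ν (⋂ n, S n) = 0 :=
    le_antisymm (le_trans (measure_mono hinter) (nu_null hν (vol_graph m h)).le) zero_le
  have := tendsto_measure_iInter_atTop hmeas hanti ⟨0, (measure_lt_top ν _).ne⟩
  rw [hnull] at this
  exact this

end Mass

section MassIVT

variable {ν : Measure (ℝ × ℝ)} {ρ : ℝ × ℝ → ENNReal} {a b : ℝ}

lemma mass_close [IsFiniteMeasure ν]
    (hν : ν = (volume : Measure (ℝ × ℝ)).withDensity ρ) (m h : ℝ) {ε : ℝ} (hε : 0 < ε) :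
    ∃ δ : ℝ, 0 < δ ∧ ∀ m' h', (∀ x ∈ Icc a b, |(m' * x + h') - (m * x + h)| ≤ δ) →
      |(ν (C a b (lineF m' h'))).toReal - (ν (C a b (lineF m h))).toReal| ≤ ε := by
  have hT := tube_tendsto_zero (ν := ν) (ρ := ρ) a b hν m h
  have hev : ∀ᶠ n : ℕ in atTop,
      ν (R a b (lineF m (h - 1 / (n + 1))) (lineF m (h + 1 / (n + 1)))) < ENNReal.ofReal ε :=
    hT.eventually_lt_const (ENNReal.ofReal_pos.2 hε)
  obtain ⟨n, hn⟩ := hev.exists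
  refine ⟨1 / (n + 1), by positivity, fun m' h' hd => ?_⟩
  obtain ⟨hs1, hs2⟩ := C_symmdiff_subset (a := a) (b := b) (δ := 1 / (n + 1)) hd
  have := abs_toReal_sub_le (ν := ν) hs1 hs2
  exact le_trans this (ENNReal.toReal_lt_of_lt_ofReal hn).le

lemma exists_anchor_lo [IsFiniteMeasure ν] (m : ℝ) {τ : ENNReal} (h0 : 0 < τ) :
    ∃ hlo : ℝ, ν (C a b (lineF m hlo)) < τ := by
  set S : ℕ → Set (ℝ × ℝ) := fun n => C a b (lineF m (-(n : ℝ))) with hSdef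
  have hanti : Antitone S := by
    intro n n' hn
    apply C_mono
    intro x _
    simp only [lineF]
    have := (Nat.cast_le (α := ℝ)).2 hn
    linarith
  have hempty : (⋂ n, S n) = ∅ := by
    rw [eq_empty_iff_forall_notMem]
    intro p hp
    simp only [mem_iInter] at hp
    obtain ⟨n, hn⟩ := exists_nat_gt (m * p.1 - p.2)
    have := (hp n).2.2
    simp only [lineF] at this
    linarith
  have hmeas : ∀ n, NullMeasurableSet (S n) ν :=
    fun n => (measurableSet_Cline a b m _).nullMeasurableSet
  have ht := tendsto_measure_iInter_atTop hmeas hanti ⟨0, (measure_lt_top ν _).ne⟩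
  rw [hempty, measure_empty] at ht
  obtain ⟨n, hn⟩ := (ht.eventually_lt_const h0).exists
  exact ⟨-(n : ℝ), hn⟩

lemma exists_anchor_hi [IsFiniteMeasure ν] (m : ℝ) {τ : ENNReal} (h1 : τ < ν (T a b)) :
    ∃ hhi : ℝ, τ < ν (C a b (lineF m hhi)) := by
  set S : ℕ → Set (ℝ × ℝ) := fun n => C a b (lineF m (n : ℝ)) with hSdef
  have hmono : Monotone S := by
    intro n n' hn
    apply C_mono
    intro x _
    simp only [lineF]
    have := (Nat.cast_le (α := ℝ)).2 hn
    linarith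
  have hunion : (⋃ n, S n) = T a b := by
    apply le_antisymm
    · exact iUnion_subset fun n => C_subset_T _
    · intro p hp
      obtain ⟨n, hn⟩ := exists_nat_ge (p.2 - m * p.1)
      refine mem_iUnion.2 ⟨n, hp.1.1, hp.1.2, ?_⟩
      simp only [lineF]
      linarith
  have ht := tendsto_measure_iUnion_atTop (μ := ν) hmono
  rw [hunion] at ht
  obtain ⟨n, hn⟩ := (ht.eventually_const_lt h1).exists
  exact ⟨(n : ℝ), hn⟩

lemma mass_continuous [IsFiniteMeasure ν]
    (hν : ν = (volume : Measure (ℝ × ℝ)).withDensity ρ) (m : ℝ) :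
    Continuous (fun h : ℝ => (ν (C a b (lineF m h))).toReal) := by
  rw [Metric.continuous_iff]
  intro h ε hε
  obtain ⟨δ, hδ, hprop⟩ := mass_close (a := a) (b := b) hν m h (half_pos hε)
  refine ⟨δ, hδ, fun h' hh' => ?_⟩
  rw [Real.dist_eq] at hh' ⊢
  have := hprop m h' fun x _ => by
    have : m * x + h' - (m * x + h) = h' - h := by ring
    rw [this]
    exact hh'.le
  linarith

lemma exists_mass_eq (hab : a < b) [IsFiniteMeasure ν]
    (hν : ν = (volume : Measure (ℝ × ℝ)).withDensity ρ)
    {τ : ENNReal} (h0 : 0 < τ) (h1 : τ < ν (T a b)) (m : ℝ) :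
    ∃ h : ℝ, ν (C a b (lineF m h)) = τ := by
  obtain ⟨hlo, hhlo⟩ := exists_anchor_lo (ν := ν) (a := a) (b := b) m h0
  obtain ⟨hhi, hhhi⟩ := exists_anchor_hi (ν := ν) (a := a) (b := b) m h1
  have horder : hlo ≤ hhi := by
    by_contra hcon
    push_neg at hcon
    have := measure_mono (μ := ν) (C_mono (a := a) (b := b)
      (f := lineF m hhi) (g := lineF m hlo) fun x _ => by simp only [lineF]; linarith)
    exact absurd (lt_of_le_of_lt (le_trans hhhi.le this) hhlo) (lt_irrefl _)
  have hτtop : τ ≠ ⊤ := (lt_of_lt_of_le h1 le_top).ne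
  have hcont : ContinuousOn (fun h : ℝ => (ν (C a b (lineF m h))).toReal) (Icc hlo hhi) :=
    (mass_continuous (a := a) (b := b) hν m).continuousOn
  have hmem : τ.toReal ∈ Icc ((ν (C a b (lineF m hlo))).toReal)
      ((ν (C a b (lineF m hhi))).toReal) := by
    constructor
    · exact ENNReal.toReal_mono hτtop hhlo.le
    · exact ENNReal.toReal_mono (measure_lt_top ν _).ne hhhi.le
  obtain ⟨h, -, hh⟩ := intermediate_value_Icc horder hcont hmem
  exact ⟨h, (ENNReal.toReal_eq_toReal_iff' (measure_lt_top ν _).ne hτtop).1 hh⟩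

end MassIVT

section PsiExt

variable {a b : ℝ} {ψ : ℝ → ℝ}

lemma exists_measurable_ext (hab : a < b) (hψ : ConcaveOn ℝ (Icc a b) ψ) :
    ∃ ψ' : ℝ → ℝ, Measurable ψ' ∧ ∀ x ∈ Icc a b, ψ' x = ψ x := by
  have hcont : ContinuousOn ψ (Ioo a b) := by
    have := hψ.continuousOn_interior
    rwa [interior_Icc] at this
  classical
  have hφ0 : Measurable ((Ioo a b).piecewise ψ fun _ => (0 : ℝ)) :=
    ContinuousOn.measurable_piecewise hcont continuousOn_const measurableSet_Ioo
  refine ⟨fun x => if x = a then ψ a else if x = b then ψ b else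
    (Ioo a b).piecewise ψ (fun _ => (0 : ℝ)) x, ?_, ?_⟩
  · exact Measurable.ite (measurableSet_eq) measurable_const
      (Measurable.ite (measurableSet_eq) measurable_const hφ0)
  · intro x hx
    show (if x = a then ψ a else if x = b then ψ b
      else (Ioo a b).piecewise ψ (fun _ => (0 : ℝ)) x) = ψ x
    by_cases hxa : x = a
    · rw [if_pos hxa, hxa]
    by_cases hxb : x = b
    · rw [if_neg hxa, if_pos hxb, hxb]
    have hxIoo : x ∈ Ioo a b := ⟨lt_of_le_of_ne hx.1 (Ne.symm hxa), lt_of_le_of_ne hx.2 hxb⟩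
    rw [if_neg hxa, if_neg hxb, Set.piecewise_eq_of_mem _ _ _ hxIoo]

/-- if the region where the line exceeds `ψ'` is Lebesgue-null, the line is below `ψ` on the
open interval -/
lemma line_le_on_Ioo (hab : a < b) (hψ : ConcaveOn ℝ (Icc a b) ψ) {ψ' : ℝ → ℝ}
    (hψ'meas : Measurable ψ') (hψ'eq : ∀ x ∈ Icc a b, ψ' x = ψ x) {m h : ℝ}
    (hnull : volume (R a b ψ' (lineF m h)) = 0) :
    ∀ x ∈ Ioo a b, m * x + h ≤ ψ x := by
  have hcont : ContinuousOn ψ (Ioo a b) := by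
    have := hψ.continuousOn_interior
    rwa [interior_Icc] at this
  intro x0 hx0
  by_contra hcon
  push_neg at hcon
  -- the set where ψ < line is open in Ioo and nonempty, hence positive measure
  have hκ : ContinuousOn (fun x => ψ x - (m * x + h)) (Ioo a b) :=
    hcont.sub (Continuous.continuousOn (by continuity))
  have hU : IsOpen (Ioo a b ∩ (fun x => ψ x - (m * x + h)) ⁻¹' (Iio 0)) :=
    hκ.isOpen_inter_preimage isOpen_Ioo isOpen_Iio
  have hUne : (Ioo a b ∩ (fun x => ψ x - (m * x + h)) ⁻¹' (Iio 0)).Nonempty :=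
    ⟨x0, hx0, by simp; linarith⟩
  have hUpos : 0 < volume (Ioo a b ∩ (fun x => ψ x - (m * x + h)) ⁻¹' (Iio 0)) :=
    hU.measure_pos volume hUne
  -- but it is contained in a null set
  rw [vol_R hψ'meas (measurable_lineF m h)] at hnull
  have hae : ∀ᵐ x ∂(volume : Measure ℝ), x ∈ Icc a b →
      ENNReal.ofReal (lineF m h x - ψ' x) = 0 := by
    have hmeasf : Measurable fun x => ENNReal.ofReal (lineF m h x - ψ' x) :=
      ((measurable_lineF m h).sub hψ'meas).ennreal_ofReal
    have h0 : ∫⁻ x, ENNReal.ofReal (lineF m h x - ψ' x)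
        ∂((volume : Measure ℝ).restrict (Icc a b)) = 0 := hnull
    have := (lintegral_eq_zero_iff hmeasf).1 h0
    exact (ae_restrict_iff' measurableSet_Icc).1 this
  have hbadnull : volume {x : ℝ | ¬ (x ∈ Icc a b →
      ENNReal.ofReal (lineF m h x - ψ' x) = 0)} = 0 := ae_iff.1 hae
  have hsub : (Ioo a b ∩ (fun x => ψ x - (m * x + h)) ⁻¹' (Iio 0)) ⊆
      {x : ℝ | ¬ (x ∈ Icc a b → ENNReal.ofReal (lineF m h x - ψ' x) = 0)} := by
    rintro x ⟨hxI, hxκ⟩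
    simp only [mem_preimage, mem_Iio] at hxκ
    intro himp
    have hIcc : x ∈ Icc a b := Ioo_subset_Icc_self hxI
    have := himp hIcc
    rw [hψ'eq x hIcc] at this
    simp only [lineF] at this
    rw [ENNReal.ofReal_eq_zero] at this
    linarith
  exact absurd (le_antisymm (le_trans (measure_mono hsub) hbadnull.le) zero_le)
    (ne_of_gt hUpos)

/-- symmetric version: if the region where `ψ'` exceeds the line is null, `ψ ≤` line on `Ioo` -/
lemma le_line_on_Ioo (hab : a < b) (hψ : ConcaveOn ℝ (Icc a b) ψ) {ψ' : ℝ → ℝ}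
    (hψ'meas : Measurable ψ') (hψ'eq : ∀ x ∈ Icc a b, ψ' x = ψ x) {m h : ℝ}
    (hnull : volume (R a b (lineF m h) ψ') = 0) :
    ∀ x ∈ Ioo a b, ψ x ≤ m * x + h := by
  have hcont : ContinuousOn ψ (Ioo a b) := by
    have := hψ.continuousOn_interior
    rwa [interior_Icc] at this
  intro x0 hx0
  by_contra hcon
  push_neg at hcon
  have hκ : ContinuousOn (fun x => ψ x - (m * x + h)) (Ioo a b) :=
    hcont.sub (Continuous.continuousOn (by continuity))
  have hU : IsOpen (Ioo a b ∩ (fun x => ψ x - (m * x + h)) ⁻¹' (Ioi 0)) :=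
    hκ.isOpen_inter_preimage isOpen_Ioo isOpen_Ioi
  have hUne : (Ioo a b ∩ (fun x => ψ x - (m * x + h)) ⁻¹' (Ioi 0)).Nonempty :=
    ⟨x0, hx0, by simp; linarith⟩
  have hUpos : 0 < volume (Ioo a b ∩ (fun x => ψ x - (m * x + h)) ⁻¹' (Ioi 0)) :=
    hU.measure_pos volume hUne
  rw [vol_R (measurable_lineF m h) hψ'meas] at hnull
  have hae : ∀ᵐ x ∂(volume : Measure ℝ), x ∈ Icc a b →
      ENNReal.ofReal (ψ' x - lineF m h x) = 0 := by
    have hmeasf : Measurable fun x => ENNReal.ofReal (ψ' x - lineF m h x) :=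
      (hψ'meas.sub (measurable_lineF m h)).ennreal_ofReal
    have h0 : ∫⁻ x, ENNReal.ofReal (ψ' x - lineF m h x)
        ∂((volume : Measure ℝ).restrict (Icc a b)) = 0 := hnull
    have := (lintegral_eq_zero_iff hmeasf).1 h0
    exact (ae_restrict_iff' measurableSet_Icc).1 this
  have hbadnull : volume {x : ℝ | ¬ (x ∈ Icc a b →
      ENNReal.ofReal (ψ' x - lineF m h x) = 0)} = 0 := ae_iff.1 hae
  have hsub : (Ioo a b ∩ (fun x => ψ x - (m * x + h)) ⁻¹' (Ioi 0)) ⊆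
      {x : ℝ | ¬ (x ∈ Icc a b → ENNReal.ofReal (ψ' x - lineF m h x) = 0)} := by
    rintro x ⟨hxI, hxκ⟩
    simp only [mem_preimage, mem_Ioi] at hxκ
    intro himp
    have hIcc : x ∈ Icc a b := Ioo_subset_Icc_self hxI
    have := himp hIcc
    rw [hψ'eq x hIcc] at this
    simp only [lineF] at this
    rw [ENNReal.ofReal_eq_zero] at this
    linarith
  exact absurd (le_antisymm (le_trans (measure_mono hsub) hbadnull.le) zero_le)
    (ne_of_gt hUpos)

lemma endpoint_le_left (hab : a < b) (hψ : ConcaveOn ℝ (Icc a b) ψ) {m h : ℝ}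
    (heq : ∀ x ∈ Ioo a b, ψ x = m * x + h) : ψ a ≤ m * a + h := by
  have hq : (a + b) / 2 ∈ Ioo a b := ⟨by linarith, by linarith⟩
  have hz : (3 * a + b) / 4 ∈ Ioo a b := ⟨by linarith, by linarith⟩
  have hchord := concave_chord (x := (3 * a + b) / 4) hψ (left_mem_Icc.2 hab.le)
    (Ioo_subset_Icc_self hq) hq.1 (by linarith) (by linarith)
  have hc1 : ((a + b) / 2 - (3 * a + b) / 4) / ((a + b) / 2 - a) = 1 / 2 := by
    rw [div_eq_div_iff (by linarith) (by norm_num)]; ring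
  have hc2 : ((3 * a + b) / 4 - a) / ((a + b) / 2 - a) = 1 / 2 := by
    rw [div_eq_div_iff (by linarith) (by norm_num)]; ring
  rw [hc1, hc2, heq _ hz, heq _ hq] at hchord
  linarith

lemma endpoint_le_right (hab : a < b) (hψ : ConcaveOn ℝ (Icc a b) ψ) {m h : ℝ}
    (heq : ∀ x ∈ Ioo a b, ψ x = m * x + h) : ψ b ≤ m * b + h := by
  have hq : (a + b) / 2 ∈ Ioo a b := ⟨by linarith, by linarith⟩
  have hz : (a + 3 * b) / 4 ∈ Ioo a b := ⟨by linarith, by linarith⟩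
  have hchord := concave_chord (x := (a + 3 * b) / 4) hψ (Ioo_subset_Icc_self hq)
    (right_mem_Icc.2 hab.le) hq.2 (by linarith) (by linarith)
  have hc1 : (b - (a + 3 * b) / 4) / (b - (a + b) / 2) = 1 / 2 := by
    rw [div_eq_div_iff (by linarith) (by norm_num)]; ring
  have hc2 : ((a + 3 * b) / 4 - (a + b) / 2) / (b - (a + b) / 2) = 1 / 2 := by
    rw [div_eq_div_iff (by linarith) (by norm_num)]; ring
  rw [hc1, hc2, heq _ hz, heq _ hq] at hchord
  linarith

end PsiExt

section Moment

variable {ν : Measure (ℝ × ℝ)} {ρ : ℝ × ℝ → ENNReal} {a b : ℝ}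

lemma abs_le_K_of_mem_Icc {x : ℝ} (hx : x ∈ Icc a b) : |x| ≤ max |a| |b| := by
  rcases abs_cases x with ⟨he, -⟩ | ⟨he, -⟩
  · rw [he]
    exact le_trans (le_trans hx.2 (le_abs_self b)) (le_max_right _ _)
  · rw [he]
    have : -x ≤ -a := by linarith [hx.1]
    exact le_trans (le_trans this (neg_le_abs a)) (le_max_left _ _)

lemma mom_diff_le [IsFiniteMeasure ν] {A B E : Set (ℝ × ℝ)}
    (hA : MeasurableSet A) (hB : MeasurableSet B)
    (hsubA : A ⊆ T a b) (hsubB : B ⊆ T a b) (h1 : A \ B ⊆ E) (h2 : B \ A ⊆ E) :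
    |(∫ p in A, p.1 ∂ν) - ∫ p in B, p.1 ∂ν| ≤ 2 * (max |a| |b|) * (ν E).toReal := by
  set K0 := max |a| |b| with hK0def
  have hKA : ∀ p ∈ A, |p.1| ≤ K0 := fun p hp => abs_le_K_of_mem_Icc (hsubA hp).1
  have hKB : ∀ p ∈ B, |p.1| ≤ K0 := fun p hp => abs_le_K_of_mem_Icc (hsubB hp).1
  have hiA : IntegrableOn (fun p : ℝ × ℝ => p.1) A ν := integrableOn_fst hA hKA
  have hiB : IntegrableOn (fun p : ℝ × ℝ => p.1) B ν := integrableOn_fst hB hKB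
  have hsplitA := integral_split (ν := ν) hA hB (f := fun p : ℝ × ℝ => p.1) hiA
  have hsplitB := integral_split (ν := ν) hB hA (f := fun p : ℝ × ℝ => p.1) hiB
  rw [inter_comm] at hsplitB
  have hb1 : ‖∫ p in A \ B, (p.1 : ℝ) ∂ν‖ ≤ K0 * (ν (A \ B)).toReal :=
    norm_setIntegral_le_of_norm_le_const (measure_lt_top ν _)
      (fun p hp => by rw [Real.norm_eq_abs]; exact hKA p hp.1)
  have hb2 : ‖∫ p in B \ A, (p.1 : ℝ) ∂ν‖ ≤ K0 * (ν (B \ A)).toReal :=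
    norm_setIntegral_le_of_norm_le_const (measure_lt_top ν _)
      (fun p hp => by rw [Real.norm_eq_abs]; exact hKB p hp.1)
  have hm1 : (ν (A \ B)).toReal ≤ (ν E).toReal :=
    ENNReal.toReal_mono (measure_lt_top ν _).ne (measure_mono h1)
  have hm2 : (ν (B \ A)).toReal ≤ (ν E).toReal :=
    ENNReal.toReal_mono (measure_lt_top ν _).ne (measure_mono h2)
  have hK0 : 0 ≤ K0 := le_trans (abs_nonneg a) (le_max_left _ _)
  rw [Real.norm_eq_abs] at hb1 hb2
  rw [hsplitA, hsplitB]
  have habs : |(∫ p in A \ B, (p.1 : ℝ) ∂ν) + (∫ p in A ∩ B, (p.1 : ℝ) ∂ν)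
      - ((∫ p in B \ A, (p.1 : ℝ) ∂ν) + ∫ p in A ∩ B, (p.1 : ℝ) ∂ν)|
      = |(∫ p in A \ B, (p.1 : ℝ) ∂ν) - ∫ p in B \ A, (p.1 : ℝ) ∂ν| := by
    congr 1
    ring
  rw [habs]
  calc |(∫ p in A \ B, (p.1 : ℝ) ∂ν) - ∫ p in B \ A, (p.1 : ℝ) ∂ν|
      ≤ |∫ p in A \ B, (p.1 : ℝ) ∂ν| + |∫ p in B \ A, (p.1 : ℝ) ∂ν| := abs_sub _ _
    _ ≤ K0 * (ν E).toReal + K0 * (ν E).toReal := by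
        have e1 := mul_le_mul_of_nonneg_left hm1 hK0
        have e2 := mul_le_mul_of_nonneg_left hm2 hK0
        linarith
    _ = 2 * K0 * (ν E).toReal := by ring

lemma hm_lipschitz (hab : a < b) [IsFiniteMeasure ν]
    (hν : ν = (volume : Measure (ℝ × ℝ)).withDensity ρ) (hρmeas : Measurable ρ)
    (hρpos : ∀ᵐ p ∂(volume : Measure (ℝ × ℝ)), 0 < ρ p)
    {τ : ENNReal} {hm : ℝ → ℝ} (hhm : ∀ m, ν (C a b (lineF m (hm m))) = τ) (m m' : ℝ) :
    |hm m' - hm m| ≤ max |a| |b| * |m' - m| := by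
  set K0 := max |a| |b| with hK0def
  have hbound : ∀ x ∈ Icc a b, |(m' - m) * x| ≤ K0 * |m' - m| := by
    intro x hx
    rw [abs_mul]
    have := mul_le_mul_of_nonneg_left (abs_le_K_of_mem_Icc hx) (abs_nonneg (m' - m))
    linarith [this]
  have claim1 : hm m' ≤ hm m + K0 * |m' - m| := by
    by_contra hcon
    push_neg at hcon
    have hstrict : ν (C a b (lineF m' (hm m + K0 * |m' - m|))) < ν (C a b (lineF m' (hm m'))) :=
      mass_strict_mono hab hν hρmeas hρpos hcon
    have hmono : ν (C a b (lineF m (hm m))) ≤ ν (C a b (lineF m' (hm m + K0 * |m' - m|))) := by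
      apply measure_mono
      apply C_mono
      intro x hx
      have := hbound x hx
      have := neg_abs_le ((m' - m) * x)
      simp only [lineF]
      nlinarith [hbound x hx, neg_abs_le ((m' - m) * x)]
    rw [hhm m, hhm m'] at *
    exact absurd (lt_of_le_of_lt hmono hstrict) (lt_irrefl _)
  have claim2 : hm m - K0 * |m' - m| ≤ hm m' := by
    by_contra hcon
    push_neg at hcon
    have hstrict : ν (C a b (lineF m' (hm m'))) < ν (C a b (lineF m' (hm m - K0 * |m' - m|))) :=
      mass_strict_mono hab hν hρmeas hρpos hcon
    have hmono : ν (C a b (lineF m' (hm m - K0 * |m' - m|))) ≤ ν (C a b (lineF m (hm m))) := by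
      apply measure_mono
      apply C_mono
      intro x hx
      simp only [lineF]
      nlinarith [hbound x hx, le_abs_self ((m' - m) * x)]
    rw [hhm m, hhm m'] at *
    exact absurd (lt_of_lt_of_le hstrict hmono) (lt_irrefl _)
  rw [abs_le]
  constructor <;> linarith

lemma G_continuous (hab : a < b) [IsFiniteMeasure ν]
    (hν : ν = (volume : Measure (ℝ × ℝ)).withDensity ρ) (hρmeas : Measurable ρ)
    (hρpos : ∀ᵐ p ∂(volume : Measure (ℝ × ℝ)), 0 < ρ p)
    {τ : ENNReal} {hm : ℝ → ℝ} (hhm : ∀ m, ν (C a b (lineF m (hm m))) = τ) :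
    Continuous (fun m => ∫ p in C a b (lineF m (hm m)), p.1 ∂ν) := by
  set K0 := max |a| |b| with hK0def
  have hK0 : 0 ≤ K0 := le_trans (abs_nonneg a) (le_max_left _ _)
  rw [Metric.continuous_iff]
  intro m ε hε
  set εs := ε / (2 * K0 + 1) with hεs
  have hεspos : 0 < εs := by positivity
  have hT := tube_tendsto_zero (ν := ν) (ρ := ρ) a b hν m (hm m)
  obtain ⟨n, hn⟩ := (hT.eventually_lt_const (ENNReal.ofReal_pos.2 hεspos)).exists
  set δt : ℝ := 1 / (n + 1) with hδt
  have hδtpos : 0 < δt := by positivity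
  refine ⟨δt / (2 * K0 + 1), by positivity, fun m' hm' => ?_⟩
  rw [Real.dist_eq] at hm' ⊢
  -- uniform distance between the two lines
  have hlip := hm_lipschitz (ν := ν) (ρ := ρ) hab hν hρmeas hρpos hhm m m'
  have hud : ∀ x ∈ Icc a b, |(m' * x + hm m') - (m * x + hm m)| ≤ δt := by
    intro x hx
    have h1 : |(m' - m) * x| ≤ K0 * |m' - m| := by
      rw [abs_mul]
      have := mul_le_mul_of_nonneg_left (abs_le_K_of_mem_Icc hx) (abs_nonneg (m' - m))
      linarith [this]
    have he : (m' * x + hm m') - (m * x + hm m) = (m' - m) * x + (hm m' - hm m) := by ring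
    rw [he]
    have h2 := abs_add_le ((m' - m) * x) (hm m' - hm m)
    have h3 : K0 * |m' - m| + K0 * |m' - m| ≤ 2 * K0 * (δt / (2 * K0 + 1)) := by
      nlinarith [hm', abs_nonneg (m' - m)]
    have h4 : 2 * K0 * (δt / (2 * K0 + 1)) ≤ δt := by
      have hqnn : 0 ≤ δt / (2 * K0 + 1) := by positivity
      have hq : (δt / (2 * K0 + 1)) * (2 * K0 + 1) = δt := by field_simp
      nlinarith [hqnn, hq]
    linarith
  obtain ⟨hs1, hs2⟩ := C_symmdiff_subset (a := a) (b := b) (m := m) (h := hm m)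
    (m' := m') (h' := hm m') (δ := δt) hud
  have hmd := mom_diff_le (ν := ν) (a := a) (b := b)
    (measurableSet_Cline a b m' (hm m')) (measurableSet_Cline a b m (hm m))
    (C_subset_T _) (C_subset_T _) hs1 hs2
  have htube : (ν (R a b (lineF m (hm m - δt)) (lineF m (hm m + δt)))).toReal ≤ εs := by
    rw [hδt]
    exact (ENNReal.toReal_lt_of_lt_ofReal hn).le
  have hfinal : 2 * K0 * (ν (R a b (lineF m (hm m - δt)) (lineF m (hm m + δt)))).toReal
      ≤ 2 * K0 * εs := by
    apply mul_le_mul_of_nonneg_left _ (by linarith)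
    exact htube
  have hlt : 2 * K0 * εs < ε := by
    have hq : εs * (2 * K0 + 1) = ε := by rw [hεs]; field_simp
    nlinarith [hεspos, hq]
  calc |(∫ p in C a b (lineF m' (hm m')), p.1 ∂ν) - ∫ p in C a b (lineF m (hm m)), p.1 ∂ν|
      ≤ 2 * K0 * (ν (R a b (lineF m (hm m - δt)) (lineF m (hm m + δt)))).toReal := hmd
    _ ≤ 2 * K0 * εs := hfinal
    _ < ε := hlt

end Moment

section Anchors

variable {ν : Measure (ℝ × ℝ)} {ρ : ℝ × ℝ → ENNReal} {a b : ℝ} {ψ : ℝ → ℝ}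

lemma tau_pos (hab : a < b) [IsFiniteMeasure ν]
    (hν : ν = (volume : Measure (ℝ × ℝ)).withDensity ρ) (hρmeas : Measurable ρ)
    (hρpos : ∀ᵐ p ∂(volume : Measure (ℝ × ℝ)), 0 < ρ p)
    (hψ : ConcaveOn ℝ (Icc a b) ψ) {ψ' : ℝ → ℝ} (hψ'eq : ∀ x ∈ Icc a b, ψ' x = ψ x) :
    0 < ν (C a b ψ') := by
  set mn := min (ψ a) (ψ b) with hmn
  have hsub : Ioo a b ×ˢ Ioo (mn - 1) mn ⊆ C a b ψ' := by
    rintro p ⟨hp1, hp2⟩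
    have hIcc : p.1 ∈ Icc a b := Ioo_subset_Icc_self hp1
    refine ⟨hIcc.1, hIcc.2, ?_⟩
    rw [hψ'eq p.1 hIcc]
    exact le_trans hp2.2.le (concave_lb hab hψ hIcc)
  have hvol : 0 < volume (Ioo a b ×ˢ Ioo (mn - 1) mn) := by
    rw [Measure.volume_eq_prod, Measure.prod_prod, Real.volume_Ioo, Real.volume_Ioo]
    exact ENNReal.mul_pos (ne_of_gt (ENNReal.ofReal_pos.2 (by linarith)))
      (ne_of_gt (ENNReal.ofReal_pos.2 (by linarith)))
  have hpos := nu_pos_of_vol_pos hν hρmeas hρpos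
    (measurableSet_Ioo.prod measurableSet_Ioo) hvol
  exact lt_of_lt_of_le hpos (measure_mono hsub)

lemma tau_lt_T (hab : a < b) [IsFiniteMeasure ν]
    (hν : ν = (volume : Measure (ℝ × ℝ)).withDensity ρ) (hρmeas : Measurable ρ)
    (hρpos : ∀ᵐ p ∂(volume : Measure (ℝ × ℝ)), 0 < ρ p)
    (hψ : ConcaveOn ℝ (Icc a b) ψ) {ψ' : ℝ → ℝ} (hψ'eq : ∀ x ∈ Icc a b, ψ' x = ψ x) :
    ν (C a b ψ') < ν (T a b) := by
  set B0 := psiUB a b ψ with hB0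
  set box := Ioo a b ×ˢ Ioo B0 (B0 + 1) with hbox
  have hdisj : Disjoint (C a b ψ') box := by
    rw [Set.disjoint_left]
    rintro p hp ⟨hp1, hp2⟩
    have hIcc : p.1 ∈ Icc a b := Ioo_subset_Icc_self hp1
    have h1 : p.2 ≤ ψ p.1 := by rw [← hψ'eq p.1 hIcc]; exact hp.2.2
    have h2 := concave_ub hab hψ hIcc
    have := hp2.1
    rw [← hB0] at h2
    linarith
  have hvol : 0 < volume box := by
    rw [hbox, Measure.volume_eq_prod, Measure.prod_prod, Real.volume_Ioo, Real.volume_Ioo]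
    exact ENNReal.mul_pos (ne_of_gt (ENNReal.ofReal_pos.2 (by linarith)))
      (ne_of_gt (ENNReal.ofReal_pos.2 (by linarith)))
  have hboxpos := nu_pos_of_vol_pos hν hρmeas hρpos
    (measurableSet_Ioo.prod measurableSet_Ioo) hvol
  have hunion : ν (C a b ψ' ∪ box) = ν (C a b ψ') + ν box :=
    measure_union hdisj (measurableSet_Ioo.prod measurableSet_Ioo)
  have hsub : C a b ψ' ∪ box ⊆ T a b := by
    rintro p (hp | hp)
    · exact C_subset_T _ hp
    · exact ⟨Ioo_subset_Icc_self hp.1, trivial⟩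
  calc ν (C a b ψ') < ν (C a b ψ') + ν box :=
        ENNReal.lt_add_right (measure_lt_top ν _).ne hboxpos.ne'
    _ = ν (C a b ψ' ∪ box) := hunion.symm
    _ ≤ ν (T a b) := measure_mono hsub

lemma nu_vline_zero (hν : ν = (volume : Measure (ℝ × ℝ)).withDensity ρ) (c : ℝ) :
    ν {p : ℝ × ℝ | p.1 = c} = 0 := nu_null hν (vol_vline c)

lemma anchor_hi_exists (hab : a < b) [IsFiniteMeasure ν]
    (hν : ν = (volume : Measure (ℝ × ℝ)).withDensity ρ)
    {τ : ENNReal} (hτlt : τ < ν (T a b)) {hmf : ℝ → ℝ}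
    (hhm : ∀ m, ν (C a b (lineF m (hmf m))) = τ) (y0 : ℝ) :
    ∃ m : ℝ, m * a + hmf m ≤ y0 := by
  by_contra hcon
  push_neg at hcon
  set D : ℕ → Set (ℝ × ℝ) := fun n => C a b (lineF n (y0 - n * a)) with hD
  have hle : ∀ n, ν (D n) ≤ τ := by
    intro n
    rw [← hhm n]
    apply measure_mono
    apply C_mono
    intro x _
    simp only [lineF]
    have := hcon (n : ℝ)
    linarith
  have hmono : Monotone D := by
    intro n n' hn
    apply C_mono
    intro x hx
    simp only [lineF]
    have hc : (n : ℝ) ≤ (n' : ℝ) := Nat.cast_le.2 hn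
    nlinarith [mul_nonneg (sub_nonneg.2 hc) (sub_nonneg.2 hx.1)]
  have hsubU : Ioc a b ×ˢ (univ : Set ℝ) ⊆ ⋃ n, D n := by
    rintro p ⟨hp1, -⟩
    obtain ⟨n, hn⟩ := exists_nat_ge ((p.2 - y0) / (p.1 - a))
    have hxa : 0 < p.1 - a := by linarith [hp1.1]
    refine mem_iUnion.2 ⟨n, hp1.1.le, hp1.2, ?_⟩
    simp only [lineF]
    have := (div_le_iff₀ hxa).1 hn
    nlinarith
  have hTle : ν (T a b) ≤ ν (Ioc a b ×ˢ (univ : Set ℝ)) := by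
    have hsplit : T a b ⊆ {p : ℝ × ℝ | p.1 = a} ∪ Ioc a b ×ˢ (univ : Set ℝ) := by
      rintro p ⟨hp1, -⟩
      rcases eq_or_lt_of_le hp1.1 with he | hlt
      · exact Or.inl he.symm
      · exact Or.inr ⟨⟨hlt, hp1.2⟩, trivial⟩
    calc ν (T a b) ≤ ν ({p : ℝ × ℝ | p.1 = a} ∪ Ioc a b ×ˢ (univ : Set ℝ)) :=
          measure_mono hsplit
      _ ≤ ν {p : ℝ × ℝ | p.1 = a} + ν (Ioc a b ×ˢ (univ : Set ℝ)) := measure_union_le _ _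
      _ = ν (Ioc a b ×ˢ (univ : Set ℝ)) := by rw [nu_vline_zero hν, zero_add]
  have ht := tendsto_measure_iUnion_atTop (μ := ν) hmono
  have hlim : ν (⋃ n, D n) ≤ τ := le_of_tendsto ht (Eventually.of_forall hle)
  have : ν (T a b) ≤ τ :=
    le_trans (le_trans hTle (measure_mono hsubU)) hlim
  exact absurd (lt_of_le_of_lt this hτlt) (lt_irrefl _)

lemma anchor_lo_exists (hab : a < b) [IsFiniteMeasure ν]
    (hν : ν = (volume : Measure (ℝ × ℝ)).withDensity ρ)
    {τ : ENNReal} (hτlt : τ < ν (T a b)) {hmf : ℝ → ℝ}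
    (hhm : ∀ m, ν (C a b (lineF m (hmf m))) = τ) (y0 : ℝ) :
    ∃ m : ℝ, m * b + hmf m ≤ y0 := by
  by_contra hcon
  push_neg at hcon
  set D : ℕ → Set (ℝ × ℝ) := fun n => C a b (lineF (-(n : ℝ)) (y0 + n * b)) with hD
  have hle : ∀ n, ν (D n) ≤ τ := by
    intro n
    rw [← hhm (-(n : ℝ))]
    apply measure_mono
    apply C_mono
    intro x _
    simp only [lineF]
    have := hcon (-(n : ℝ))
    linarith
  have hmono : Monotone D := by
    intro n n' hn
    apply C_mono
    intro x hx
    simp only [lineF]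
    have hc : (n : ℝ) ≤ (n' : ℝ) := Nat.cast_le.2 hn
    nlinarith [mul_nonneg (sub_nonneg.2 hc) (sub_nonneg.2 hx.2)]
  have hsubU : Ico a b ×ˢ (univ : Set ℝ) ⊆ ⋃ n, D n := by
    rintro p ⟨hp1, -⟩
    obtain ⟨n, hn⟩ := exists_nat_ge ((p.2 - y0) / (b - p.1))
    have hxb : 0 < b - p.1 := by linarith [hp1.2]
    refine mem_iUnion.2 ⟨n, hp1.1, hp1.2.le, ?_⟩
    simp only [lineF]
    have := (div_le_iff₀ hxb).1 hn
    nlinarith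
  have hTle : ν (T a b) ≤ ν (Ico a b ×ˢ (univ : Set ℝ)) := by
    have hsplit : T a b ⊆ {p : ℝ × ℝ | p.1 = b} ∪ Ico a b ×ˢ (univ : Set ℝ) := by
      rintro p ⟨hp1, -⟩
      rcases eq_or_lt_of_le hp1.2 with he | hlt
      · exact Or.inl he
      · exact Or.inr ⟨⟨hp1.1, hlt⟩, trivial⟩
    calc ν (T a b) ≤ ν ({p : ℝ × ℝ | p.1 = b} ∪ Ico a b ×ˢ (univ : Set ℝ)) :=
          measure_mono hsplit
      _ ≤ ν {p : ℝ × ℝ | p.1 = b} + ν (Ico a b ×ˢ (univ : Set ℝ)) := measure_union_le _ _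
      _ = ν (Ico a b ×ˢ (univ : Set ℝ)) := by rw [nu_vline_zero hν, zero_add]
  have ht := tendsto_measure_iUnion_atTop (μ := ν) hmono
  have hlim : ν (⋃ n, D n) ≤ τ := le_of_tendsto ht (Eventually.of_forall hle)
  have : ν (T a b) ≤ τ :=
    le_trans (le_trans hTle (measure_mono hsubU)) hlim
  exact absurd (lt_of_le_of_lt this hτlt) (lt_irrefl _)

lemma cross_hi (hab : a < b) [IsFiniteMeasure ν] (hψ : ConcaveOn ℝ (Icc a b) ψ)
    {ψ' : ℝ → ℝ} (hψ'meas : Measurable ψ') (hψ'eq : ∀ x ∈ Icc a b, ψ' x = ψ x)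
    {m h : ℝ} (hmass : ν (C a b (lineF m h)) = ν (C a b ψ')) (hka : m * a + h ≤ ψ a) :
    (∫ p in C a b ψ', p.1 ∂ν) ≤ ∫ p in C a b (lineF m h), p.1 ∂ν := by
  obtain ⟨w, hw1, hw2⟩ := exists_w_left hab hψ hka
  refine moment_le (measurableSet_C hψ'meas) (measurableSet_Cline a b m h)
    (fun p hp => abs_fst_le_of_mem_C hp) (fun p hp => abs_fst_le_of_mem_C hp)
    hmass.symm (c := w) ?_ ?_
  · rintro p ⟨⟨h1, h2, h3⟩, h4⟩
    have h4' : lineF m h p.1 < p.2 := by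
      by_contra hcc
      push_neg at hcc
      exact h4 ⟨h1, h2, hcc⟩
    rw [hψ'eq p.1 ⟨h1, h2⟩] at h3
    simp only [lineF] at h4'
    exact hw1 p.1 h1 h2 (lt_of_lt_of_le h4' h3)
  · rintro p ⟨⟨h1, h2, h3⟩, h4⟩
    have h4' : ψ' p.1 < p.2 := by
      by_contra hcc
      push_neg at hcc
      exact h4 ⟨h1, h2, hcc⟩
    rw [hψ'eq p.1 ⟨h1, h2⟩] at h4'
    simp only [lineF] at h3
    exact hw2 p.1 h1 h2 (lt_of_lt_of_le h4' h3)

lemma cross_lo (hab : a < b) [IsFiniteMeasure ν] (hψ : ConcaveOn ℝ (Icc a b) ψ)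
    {ψ' : ℝ → ℝ} (hψ'meas : Measurable ψ') (hψ'eq : ∀ x ∈ Icc a b, ψ' x = ψ x)
    {m h : ℝ} (hmass : ν (C a b (lineF m h)) = ν (C a b ψ')) (hkb : m * b + h ≤ ψ b) :
    (∫ p in C a b (lineF m h), p.1 ∂ν) ≤ ∫ p in C a b ψ', p.1 ∂ν := by
  obtain ⟨w, hw1, hw2⟩ := exists_w_right hab hψ hkb
  refine moment_le (measurableSet_Cline a b m h) (measurableSet_C hψ'meas)
    (fun p hp => abs_fst_le_of_mem_C hp) (fun p hp => abs_fst_le_of_mem_C hp)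
    hmass (c := w) ?_ ?_
  · rintro p ⟨⟨h1, h2, h3⟩, h4⟩
    have h4' : ψ' p.1 < p.2 := by
      by_contra hcc
      push_neg at hcc
      exact h4 ⟨h1, h2, hcc⟩
    rw [hψ'eq p.1 ⟨h1, h2⟩] at h4'
    simp only [lineF] at h3
    exact hw1 p.1 h1 h2 (lt_of_lt_of_le h4' h3)
  · rintro p ⟨⟨h1, h2, h3⟩, h4⟩
    have h4' : lineF m h p.1 < p.2 := by
      by_contra hcc
      push_neg at hcc
      exact h4 ⟨h1, h2, hcc⟩
    rw [hψ'eq p.1 ⟨h1, h2⟩] at h3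
    simp only [lineF] at h4'
    exact hw2 p.1 h1 h2 (lt_of_lt_of_le h4' h3)

end Anchors

end

end Lemma7

open Lemma7

/-- Lemma 7: let `ψ` be concave on `[a,b]` and let `ν` be a finite measure on `ℝ²`,
absolutely continuous with respect to Lebesgue measure with a.e. strictly positive
density `ρ`. Writing `C_φ = {(x,y) : a ≤ x ≤ b, y ≤ φ(x)}`, there is a linear function
`ψ₀(x) = m x + h` with: (i) `ν(C_ψ) = ν(C_{ψ₀})`; (ii) the `ν`-moments `∫_{C} x dν`
agree; (iii) `ψ(a) ≤ ψ₀(a)` and `ψ(b) ≤ ψ₀(b)`; (iv) `m` is at most the right derivative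
of `ψ` at `a` and at least the left derivative of `ψ` at `b` (one-sided limits of
difference quotients, existing in the extended reals). -/
theorem exists_linear_function_same_mass_and_moment
    (a b : ℝ) (hab : a < b) (ψ : ℝ → ℝ) (hψ : ConcaveOn ℝ (Set.Icc a b) ψ)
    (ν : Measure (ℝ × ℝ)) [IsFiniteMeasure ν]
    (ρ : ℝ × ℝ → ENNReal) (hρmeas : Measurable ρ)
    (hν : ν = (volume : Measure (ℝ × ℝ)).withDensity ρ)
    (hρpos : ∀ᵐ p ∂(volume : Measure (ℝ × ℝ)), 0 < ρ p) :
    ∃ m h : ℝ,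
      ν {p : ℝ × ℝ | a ≤ p.1 ∧ p.1 ≤ b ∧ p.2 ≤ ψ p.1} =
        ν {p : ℝ × ℝ | a ≤ p.1 ∧ p.1 ≤ b ∧ p.2 ≤ m * p.1 + h} ∧
      (∫ p in {p : ℝ × ℝ | a ≤ p.1 ∧ p.1 ≤ b ∧ p.2 ≤ ψ p.1}, p.1 ∂ν) =
        (∫ p in {p : ℝ × ℝ | a ≤ p.1 ∧ p.1 ≤ b ∧ p.2 ≤ m * p.1 + h}, p.1 ∂ν) ∧
      (ψ a ≤ m * a + h ∧ ψ b ≤ m * b + h) ∧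
      (∃ Da Db : EReal,
        Tendsto (fun x : ℝ => ((ψ x - ψ a) / (x - a) : EReal))
          (nhdsWithin a (Set.Ioc a b)) (nhds Da) ∧
        Tendsto (fun x : ℝ => ((ψ b - ψ x) / (b - x) : EReal))
          (nhdsWithin b (Set.Ico a b)) (nhds Db) ∧
        (m : EReal) ≤ Da ∧ Db ≤ (m : EReal)) := by
  classical
  obtain ⟨ψ', hψ'meas, hψ'eq⟩ := exists_measurable_ext hab hψ
  have hCψ : {p : ℝ × ℝ | a ≤ p.1 ∧ p.1 ≤ b ∧ p.2 ≤ ψ p.1} = Lemma7.C a b ψ' := by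
    ext p
    simp only [Lemma7.C, Set.mem_setOf_eq]
    constructor
    · rintro ⟨h1, h2, h3⟩
      exact ⟨h1, h2, by rw [hψ'eq p.1 ⟨h1, h2⟩]; exact h3⟩
    · rintro ⟨h1, h2, h3⟩
      rw [hψ'eq p.1 ⟨h1, h2⟩] at h3
      exact ⟨h1, h2, h3⟩
  have hτpos := tau_pos hab hν hρmeas hρpos hψ hψ'eq
  have hτlt := tau_lt_T hab hν hρmeas hρpos hψ hψ'eq
  have hEx : ∀ m : ℝ, ∃ h : ℝ, ν (Lemma7.C a b (lineF m h)) = ν (Lemma7.C a b ψ') :=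
    exists_mass_eq hab hν hτpos hτlt
  choose hmf hhm using hEx
  obtain ⟨mhi, hmhi⟩ := anchor_hi_exists hab hν hτlt hhm (ψ a)
  obtain ⟨mlo, hmlo⟩ := anchor_lo_exists hab hν hτlt hhm (ψ b)
  have hGcont := G_continuous hab hν hρmeas hρpos hhm
  have hXhi := cross_hi hab hψ hψ'meas hψ'eq (hhm mhi) hmhi
  have hXlo := cross_lo hab hψ hψ'meas hψ'eq (hhm mlo) hmlo
  have hIVT : ∃ m0 : ℝ, (∫ p in Lemma7.C a b (lineF m0 (hmf m0)), p.1 ∂ν)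
      = ∫ p in Lemma7.C a b ψ', p.1 ∂ν := by
    rcases le_total mlo mhi with hor | hor
    · obtain ⟨m0, -, hm0⟩ := intermediate_value_Icc hor hGcont.continuousOn ⟨hXlo, hXhi⟩
      exact ⟨m0, hm0⟩
    · obtain ⟨m0, -, hm0⟩ := intermediate_value_Icc' hor hGcont.continuousOn ⟨hXlo, hXhi⟩
      exact ⟨m0, hm0⟩
  obtain ⟨m0, hGm0⟩ := hIVT
  set h0 := hmf m0 with hh0
  have hAmeas : MeasurableSet (Lemma7.C a b ψ') := measurableSet_C hψ'meas
  have hBmeas : MeasurableSet (Lemma7.C a b (lineF m0 h0)) := measurableSet_Cline a b m0 h0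
  have hmass : ν (Lemma7.C a b ψ') = ν (Lemma7.C a b (lineF m0 h0)) := (hhm m0).symm
  have hmom : (∫ p in Lemma7.C a b ψ', p.1 ∂ν)
      = ∫ p in Lemma7.C a b (lineF m0 h0), p.1 ∂ν := hGm0.symm
  have hKψ : ∀ p ∈ Lemma7.C a b ψ', |p.1| ≤ max |a| |b| :=
    fun p hp => abs_fst_le_of_mem_C hp
  have hKL : ∀ p ∈ Lemma7.C a b (lineF m0 h0), |p.1| ≤ max |a| |b| :=
    fun p hp => abs_fst_le_of_mem_C hp
  -- (iii) at a
  have hiiiA : ψ a ≤ m0 * a + h0 := by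
    by_contra hc
    push_neg at hc
    obtain ⟨w, hw1, hw2⟩ := exists_w_left hab hψ hc.le
    have hP : ∀ p ∈ Lemma7.C a b ψ' \ Lemma7.C a b (lineF m0 h0), p.1 ≤ w := by
      rintro p ⟨⟨h1, h2, h3⟩, h4⟩
      have h4' : lineF m0 h0 p.1 < p.2 := by
        by_contra hcc
        push_neg at hcc
        exact h4 ⟨h1, h2, hcc⟩
      rw [hψ'eq p.1 ⟨h1, h2⟩] at h3
      simp only [lineF] at h4'
      exact hw1 p.1 h1 h2 (lt_of_lt_of_le h4' h3)
    have hN : ∀ p ∈ Lemma7.C a b (lineF m0 h0) \ Lemma7.C a b ψ', w ≤ p.1 := by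
      rintro p ⟨⟨h1, h2, h3⟩, h4⟩
      have h4' : ψ' p.1 < p.2 := by
        by_contra hcc
        push_neg at hcc
        exact h4 ⟨h1, h2, hcc⟩
      rw [hψ'eq p.1 ⟨h1, h2⟩] at h4'
      simp only [lineF] at h3
      exact hw2 p.1 h1 h2 (lt_of_lt_of_le h4' h3)
    obtain ⟨hPnull, hNnull⟩ :=
      diff_null_of_moment_eq hν hAmeas hBmeas hKψ hKL hmass hP hN hmom
    have hPvol : volume (R a b (lineF m0 h0) ψ') = 0 := by
      apply vol_null_of_nu_null hν hρmeas hρpos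
        (measurableSet_R (measurable_lineF m0 h0) hψ'meas)
      rw [← C_diff_C]
      exact hPnull
    have hNvol : volume (R a b ψ' (lineF m0 h0)) = 0 := by
      apply vol_null_of_nu_null hν hρmeas hρpos
        (measurableSet_R hψ'meas (measurable_lineF m0 h0))
      rw [← C_diff_C]
      exact hNnull
    have heq : ∀ x ∈ Ioo a b, ψ x = m0 * x + h0 := fun x hx =>
      le_antisymm (le_line_on_Ioo hab hψ hψ'meas hψ'eq hPvol x hx)
        (line_le_on_Ioo hab hψ hψ'meas hψ'eq hNvol x hx)
    exact absurd (endpoint_le_left hab hψ heq) (not_le.2 hc)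
  -- (iii) at b
  have hiiiB : ψ b ≤ m0 * b + h0 := by
    by_contra hc
    push_neg at hc
    obtain ⟨w, hw1, hw2⟩ := exists_w_right hab hψ hc.le
    have hP : ∀ p ∈ Lemma7.C a b (lineF m0 h0) \ Lemma7.C a b ψ', p.1 ≤ w := by
      rintro p ⟨⟨h1, h2, h3⟩, h4⟩
      have h4' : ψ' p.1 < p.2 := by
        by_contra hcc
        push_neg at hcc
        exact h4 ⟨h1, h2, hcc⟩
      rw [hψ'eq p.1 ⟨h1, h2⟩] at h4'
      simp only [lineF] at h3
      exact hw1 p.1 h1 h2 (lt_of_lt_of_le h4' h3)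
    have hN : ∀ p ∈ Lemma7.C a b ψ' \ Lemma7.C a b (lineF m0 h0), w ≤ p.1 := by
      rintro p ⟨⟨h1, h2, h3⟩, h4⟩
      have h4' : lineF m0 h0 p.1 < p.2 := by
        by_contra hcc
        push_neg at hcc
        exact h4 ⟨h1, h2, hcc⟩
      rw [hψ'eq p.1 ⟨h1, h2⟩] at h3
      simp only [lineF] at h4'
      exact hw2 p.1 h1 h2 (lt_of_lt_of_le h4' h3)
    obtain ⟨hPnull, hNnull⟩ :=
      diff_null_of_moment_eq hν hBmeas hAmeas hKL hKψ hmass.symm hP hN hmom.symm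
    have hPvol : volume (R a b ψ' (lineF m0 h0)) = 0 := by
      apply vol_null_of_nu_null hν hρmeas hρpos
        (measurableSet_R hψ'meas (measurable_lineF m0 h0))
      rw [← C_diff_C]
      exact hPnull
    have hNvol : volume (R a b (lineF m0 h0) ψ') = 0 := by
      apply vol_null_of_nu_null hν hρmeas hρpos
        (measurableSet_R (measurable_lineF m0 h0) hψ'meas)
      rw [← C_diff_C]
      exact hNnull
    have heq : ∀ x ∈ Ioo a b, ψ x = m0 * x + h0 := fun x hx =>
      le_antisymm (le_line_on_Ioo hab hψ hψ'meas hψ'eq hNvol x hx)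
        (line_le_on_Ioo hab hψ hψ'meas hψ'eq hPvol x hx)
    exact absurd (endpoint_le_right hab hψ heq) (not_le.2 hc)
  -- (iv) at a
  have hiva : (m0 : EReal) ≤ Lemma7.Da a b ψ := by
    by_contra hc
    push_neg at hc
    have hlt : ∀ x, a < x → x ≤ b → ψ x < m0 * x + h0 := by
      intro x hax hxb
      have h1 : (((ψ x - ψ a) / (x - a) : ℝ) : EReal) < (m0 : EReal) :=
        lt_of_le_of_lt (le_Da hab hψ hax hxb) hc
      have h2 : (ψ x - ψ a) / (x - a) < m0 := EReal.coe_lt_coe_iff.1 h1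
      have h3 : (0 : ℝ) < x - a := by linarith
      have h4 := (div_lt_iff₀ h3).1 h2
      nlinarith [hiiiA]
    have hPnull : ν (Lemma7.C a b ψ' \ Lemma7.C a b (lineF m0 h0)) = 0 := by
      have hsub : Lemma7.C a b ψ' \ Lemma7.C a b (lineF m0 h0) ⊆ {p : ℝ × ℝ | p.1 = a} := by
        rintro p ⟨⟨h1, h2, h3⟩, h4⟩
        have h4' : lineF m0 h0 p.1 < p.2 := by
          by_contra hcc
          push_neg at hcc
          exact h4 ⟨h1, h2, hcc⟩
        rw [hψ'eq p.1 ⟨h1, h2⟩] at h3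
        simp only [lineF] at h4'
        rcases eq_or_lt_of_le h1 with he | hlt2
        · exact he.symm
        · exact absurd (hlt p.1 hlt2 h2) (not_lt.2 (le_trans h4'.le h3))
      exact le_antisymm (le_trans (measure_mono hsub) (nu_vline_zero hν a).le) zero_le
    have hNnull : ν (Lemma7.C a b (lineF m0 h0) \ Lemma7.C a b ψ') = 0 := by
      rw [← nu_diff_eq hAmeas hBmeas hmass]
      exact hPnull
    have hNvol : volume (R a b ψ' (lineF m0 h0)) = 0 := by
      apply vol_null_of_nu_null hν hρmeas hρpos
        (measurableSet_R hψ'meas (measurable_lineF m0 h0))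
      rw [← C_diff_C]
      exact hNnull
    have hge := line_le_on_Ioo hab hψ hψ'meas hψ'eq hNvol ((a + b) / 2)
      ⟨by linarith, by linarith⟩
    exact absurd hge (not_le.2 (hlt ((a + b) / 2) (by linarith) (by linarith)))
  -- (iv) at b
  have hivb : Lemma7.Db a b ψ ≤ (m0 : EReal) := by
    by_contra hc
    push_neg at hc
    have hlt : ∀ x, a ≤ x → x < b → ψ x < m0 * x + h0 := by
      intro x hax hxb
      have h1 : (m0 : EReal) < (((ψ b - ψ x) / (b - x) : ℝ) : EReal) :=
        lt_of_lt_of_le hc (Db_le hab hψ hax hxb)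
      have h2 : m0 < (ψ b - ψ x) / (b - x) := EReal.coe_lt_coe_iff.1 h1
      have h3 : (0 : ℝ) < b - x := by linarith
      have h4 := (lt_div_iff₀ h3).1 h2
      nlinarith [hiiiB]
    have hPnull : ν (Lemma7.C a b ψ' \ Lemma7.C a b (lineF m0 h0)) = 0 := by
      have hsub : Lemma7.C a b ψ' \ Lemma7.C a b (lineF m0 h0) ⊆ {p : ℝ × ℝ | p.1 = b} := by
        rintro p ⟨⟨h1, h2, h3⟩, h4⟩
        have h4' : lineF m0 h0 p.1 < p.2 := by
          by_contra hcc
          push_neg at hcc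
          exact h4 ⟨h1, h2, hcc⟩
        rw [hψ'eq p.1 ⟨h1, h2⟩] at h3
        simp only [lineF] at h4'
        rcases eq_or_lt_of_le h2 with he | hlt2
        · exact he
        · exact absurd (hlt p.1 h1 hlt2) (not_lt.2 (le_trans h4'.le h3))
      exact le_antisymm (le_trans (measure_mono hsub) (nu_vline_zero hν b).le) zero_le
    have hNnull : ν (Lemma7.C a b (lineF m0 h0) \ Lemma7.C a b ψ') = 0 := by
      rw [← nu_diff_eq hAmeas hBmeas hmass]
      exact hPnull
    have hNvol : volume (R a b ψ' (lineF m0 h0)) = 0 := by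
      apply vol_null_of_nu_null hν hρmeas hρpos
        (measurableSet_R hψ'meas (measurable_lineF m0 h0))
      rw [← C_diff_C]
      exact hNnull
    have hge := line_le_on_Ioo hab hψ hψ'meas hψ'eq hNvol ((a + b) / 2)
      ⟨by linarith, by linarith⟩
    exact absurd hge (not_le.2 (hlt ((a + b) / 2) (by linarith) (by linarith)))
  -- conversion of the slope functions to EReal divisions
  have hfA : (fun x : ℝ => ((ψ x - ψ a) / (x - a) : EReal))
      = fun x : ℝ => (((ψ x - ψ a) / (x - a) : ℝ) : EReal) := by
    funext x
    norm_cast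
  have hfB : (fun x : ℝ => ((ψ b - ψ x) / (b - x) : EReal))
      = fun x : ℝ => (((ψ b - ψ x) / (b - x) : ℝ) : EReal) := by
    funext x
    norm_cast
  refine ⟨m0, h0, ?_, ?_, ⟨hiiiA, hiiiB⟩,
    Lemma7.Da a b ψ, Lemma7.Db a b ψ, ?_, ?_, hiva, hivb⟩
  · rw [hCψ]
    exact (hhm m0).symm
  · rw [hCψ]
    exact hGm0.symm
  · rw [hfA]
    exact tendsto_Da hab hψ
  · rw [hfB]
    exact tendsto_Db hab hψ
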